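/- arXiv:2601.09825 — 10 statements merged into one kernel-verified Lean document; each statement's English description precedes it below -/
import Mathlib

section
/- For all real x, y, z > 0 with y ≤ z, one has x − z ≤ 3·√(z·Δ(x,y)) + 6·Δ(x,y). -/
/-
Put `d = x - y` and `s = x + y`, so `Δ(x,y) = d²/s`; since `x - z ≤ d` it suffices to bound `d`.
If `s ≤ 4z` then `z·Δ ≥ d²/4`, so `d ≤ 2√(zΔ)`. If `s > 4z` then `y ≤ z < s/4` forces `d > s/2`,
so `Δ = d·(d/s) > d/2`. Either way `d ≤ 2√(zΔ) + 2Δ`.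
-/

/-- Triangular discrimination: `Δ(0,0) = 0` and `Δ(p,q) = (p-q)²/(p+q)` otherwise. -/
noncomputable def tdisc (p q : ℝ) : ℝ := if p = 0 ∧ q = 0 then 0 else (p - q)^2 / (p + q)

lemma tdisc_of_add_ne_zero {p q : ℝ} (h : p + q ≠ 0) : tdisc p q = (p - q)^2 / (p + q) :=
  if_neg fun ⟨hp, hq⟩ => h (by rw [hp, hq, add_zero])

lemma tdisc_nonneg {p q : ℝ} (h : 0 ≤ p + q) : 0 ≤ tdisc p q := by
  unfold tdisc
  split_ifs
  exacts [le_rfl, div_nonneg (sq_nonneg _) h]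

section

variable {x y z : ℝ}

lemma sub_le_two_mul_sqrt_mul_tdisc (hs : 0 < x + y) (hsz : x + y ≤ 4 * z) :
    x - y ≤ 2 * √(z * tdisc x y) := by
  have hsq : ((x - y) / 2)^2 ≤ z * tdisc x y := by
    rw [tdisc_of_add_ne_zero hs.ne', mul_div_assoc', le_div_iff₀ hs]
    nlinarith [mul_nonneg (sq_nonneg (x - y)) (sub_nonneg.2 hsz)]
  linarith [(le_abs_self _).trans (Real.abs_le_sqrt hsq)]

lemma sub_lt_two_mul_tdisc (hs : 0 < x + y) (hyz : y ≤ z) (hsz : 4 * z < x + y) :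
    x - y < 2 * tdisc x y := by
  have hd : x + y < 2 * (x - y) := by linarith
  rw [tdisc_of_add_ne_zero hs.ne', mul_div_assoc', lt_div_iff₀ hs]
  nlinarith

lemma sub_le_two_mul_sqrt_mul_tdisc_add_two_mul_tdisc (hs : 0 < x + y) (hyz : y ≤ z) :
    x - y ≤ 2 * √(z * tdisc x y) + 2 * tdisc x y := by
  have hΔ := tdisc_nonneg hs.le
  rcases le_or_gt (x + y) (4 * z) with hsz | hsz
  · linarith [sub_le_two_mul_sqrt_mul_tdisc hs hsz]
  · linarith [sub_lt_two_mul_tdisc hs hyz hsz, Real.sqrt_nonneg (z * tdisc x y)]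

end

theorem stmt2_general (x y z : ℝ) (hx : 0 < x) (hy : 0 < y) (hyz : y ≤ z) :
    x - z ≤ 3 * Real.sqrt (z * tdisc x y) + 6 * tdisc x y := by
  have hs : 0 < x + y := add_pos hx hy
  have hd := sub_le_two_mul_sqrt_mul_tdisc_add_two_mul_tdisc hs hyz
  linarith [tdisc_nonneg hs.le, Real.sqrt_nonneg (z * tdisc x y)]

theorem stmt2 (x y z : ℝ) (hx : 0 < x) (hy : 0 < y) (hz : 0 < z) (hyz : y ≤ z) :
    x - z ≤ 3 * Real.sqrt (z * tdisc x y) + 6 * tdisc x y :=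
  stmt2_general x y z hx hy hyz
end

section
/- For every q ∈ [0,1] and p ∈ (0,1), Δ(p,q) ≤ (2 / log₂ e) · ( q·log(q/p) + (1−q)·log((1−q)/(1−p)) ), where logarithms are natural and the convention 0·log 0 = 0 is used; the bracketed quantity is the Kullback–Leibler divergence KL(Bernoulli(q) ‖ Bernoulli(p)). -/
noncomputable def logTwoE : ℝ := 1 / Real.log 2

open Real InformationTheory

namespace Real

theorem two_mul_sub_one_div_add_one_le_log {t : ℝ} (ht : 1 ≤ t) :
    2 * (t - 1) / (t + 1) ≤ log t := by
  have hsum := hasSum_log_one_add (sub_nonneg.mpr ht)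
  rw [add_sub_cancel] at hsum
  calc 2 * (t - 1) / (t + 1)
        = 2 * (1 / (2 * (0 : ℕ) + 1)) * ((t - 1) / (t - 1 + 2)) ^ (2 * 0 + 1) := by
          norm_num
          ring
    _ ≤ log t := le_hasSum hsum 0 fun k _ ↦ by positivity

theorem sub_inv_le_two_mul_log {s : ℝ} (hs₀ : 0 < s) (hs₁ : s ≤ 1) :
    s - s⁻¹ ≤ 2 * log s := by
  have := sinh_le_self_iff.mpr (log_nonpos hs₀.le hs₁)
  rw [sinh_log hs₀] at this
  linarith

end Real

namespace InformationTheory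

theorem mul_klFun_div {p : ℝ} (q : ℝ) (hp : p ≠ 0) :
    p * klFun (q / p) = q * log (q / p) + p - q := by
  rw [klFun_apply]
  field_simp

theorem sq_one_sub_div_one_add_le_klFun {t : ℝ} (ht : 1 ≤ t) :
    (1 - t) ^ 2 / (1 + t) ≤ klFun t := by
  have hlog := mul_le_mul_of_nonneg_left (two_mul_sub_one_div_add_one_le_log ht)
    (by linarith : 0 ≤ t)
  have : (1 - t) ^ 2 / (1 + t) = t * (2 * (t - 1) / (t + 1)) + 1 - t := by
    field_simp
    ring
  rw [this, klFun_apply]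
  linarith

theorem sq_one_sub_mul_one_add_le_klFun_sq {s : ℝ} (hs₀ : 0 ≤ s) (hs₁ : s ≤ 1) :
    (1 - s) ^ 2 * (1 + s) ≤ klFun (s ^ 2) := by
  rcases hs₀.eq_or_lt with rfl | hs₀
  · simp [klFun_zero]
  have hlog := mul_le_mul_of_nonneg_left (sub_inv_le_two_mul_log hs₀ hs₁) (sq_nonneg s)
  rw [klFun_apply, log_pow, Nat.cast_ofNat]
  have : s ^ 2 * (s - s⁻¹) = s ^ 3 - s := by
    field_simp
  nlinarith

theorem sq_one_sub_div_one_add_le_two_mul_log_two_mul_klFun {t : ℝ} (ht : 0 ≤ t) :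
    (1 - t) ^ 2 / (1 + t) ≤ 2 * log 2 * klFun t := by
  have hlog2 := log_two_gt_d9
  rcases le_total 1 t with h1 | h1
  · calc (1 - t) ^ 2 / (1 + t) ≤ klFun t := sq_one_sub_div_one_add_le_klFun h1
      _ ≤ 2 * log 2 * klFun t := by
        nlinarith [klFun_nonneg ht]
  · obtain ⟨s, hs₀, rfl⟩ : ∃ s, 0 ≤ s ∧ s ^ 2 = t := ⟨√t, sqrt_nonneg t, sq_sqrt ht⟩
    have hs₁ : s ≤ 1 := by nlinarith
    have hkl := sq_one_sub_mul_one_add_le_klFun_sq hs₀ hs₁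
    -- `1 + s ≤ c (1 + s²)` for every `s` as soon as `4c(c-1) > 1`, and `c = 2 log 2 ≈ 1.386`
    have hquad : 1 + s ≤ 2 * log 2 * (1 + s ^ 2) := by
      nlinarith [sq_nonneg (s - 1 / 3)]
    rw [div_le_iff₀ (by positivity)]
    calc (1 - s ^ 2) ^ 2 = (1 - s) ^ 2 * (1 + s) * (1 + s) := by ring
      _ ≤ klFun (s ^ 2) * (2 * log 2 * (1 + s ^ 2)) :=
        mul_le_mul hkl hquad (by positivity) (klFun_nonneg ht)
      _ = 2 * log 2 * klFun (s ^ 2) * (1 + s ^ 2) := by ring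

end InformationTheory

theorem tdisc_eq_mul {p : ℝ} (q : ℝ) (hp : 0 < p) :
    tdisc p q = p * ((1 - q / p) ^ 2 / (1 + q / p)) := by
  rw [tdisc, if_neg fun h ↦ hp.ne' h.1]
  field_simp

theorem tdisc_le_two_mul_log_two_mul_klFun {p q : ℝ} (hp : 0 < p) (hq : 0 ≤ q) :
    tdisc p q ≤ 2 * log 2 * (p * klFun (q / p)) := by
  rw [tdisc_eq_mul q hp, mul_left_comm]
  exact mul_le_mul_of_nonneg_left
    (sq_one_sub_div_one_add_le_two_mul_log_two_mul_klFun (by positivity)) hp.le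

/-- Log-loss triangle condition: `Δ(p,q) ≤ (2 / log₂ e) · KL(Bernoulli(q) ‖ Bernoulli(p))`.
Logarithms are natural; the convention `0 · log 0 = 0` is automatic since `0 * x = 0`
and `Real.log 0 = 0` in Lean. -/
theorem stmt3 (q p : ℝ) (hq : q ∈ Set.Icc (0:ℝ) 1) (hp : p ∈ Set.Ioo (0:ℝ) 1) :
    tdisc p q ≤ (2 / logTwoE) *
      (q * Real.log (q / p) + (1 - q) * Real.log ((1 - q) / (1 - p))) := by
  obtain ⟨hq₀, hq₁⟩ := hq
  obtain ⟨hp₀, hp₁⟩ := hp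
  have hp₁' : 0 < 1 - p := by linarith
  have hconst : 2 / logTwoE = 2 * log 2 := by
    rw [logTwoE, div_div_eq_mul_div, div_one]
  have hkl : q * log (q / p) + (1 - q) * log ((1 - q) / (1 - p)) =
      p * klFun (q / p) + (1 - p) * klFun ((1 - q) / (1 - p)) := by
    rw [mul_klFun_div q hp₀.ne', mul_klFun_div (1 - q) hp₁'.ne']
    ring
  have hrest : 0 ≤ (1 - p) * klFun ((1 - q) / (1 - p)) :=
    mul_nonneg hp₁'.le (klFun_nonneg (div_nonneg (by linarith) hp₁'.le))
  rw [hconst, hkl]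
  calc tdisc p q ≤ 2 * log 2 * (p * klFun (q / p)) :=
        tdisc_le_two_mul_log_two_mul_klFun hp₀ hq₀
    _ ≤ _ := by gcongr; exact le_add_of_nonneg_right hrest
end

section
/- For every q ∈ [0,1] and p ∈ (0,1], Δ(p,q) ≤ (4·√e / log₂ e) · ( p − q + q·log(q/p) ), where logarithms are natural and the convention 0·log 0 = 0 is used; the bracketed quantity is the Kullback–Leibler divergence between Poisson distributions with means q and p. -/
open Real

/-- `KL(Poisson(q) ‖ Poisson(p))`. -/
noncomputable def poissonKL (q p : ℝ) : ℝ := p - q + q * log (q / p)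

lemma tdisc_le_two_mul_sq_sqrt_sub_sqrt {p q : ℝ} (hp : 0 ≤ p) (hq : 0 ≤ q) :
    tdisc p q ≤ 2 * (√p - √q) ^ 2 := by
  unfold tdisc
  split_ifs with h
  · positivity
  have hpq : 0 < p + q := by
    by_contra! hle
    exact h ⟨by linarith, by linarith⟩
  have hsp := sq_sqrt hp
  have hsq := sq_sqrt hq
  have hfactor : (p - q) ^ 2 = (√p - √q) ^ 2 * (√p + √q) ^ 2 := by
    conv_lhs => rw [← hsp, ← hsq]
    ring
  have hsum : (√p + √q) ^ 2 ≤ 2 * (p + q) := by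
    nlinarith [sq_nonneg (√p - √q)]
  rw [div_le_iff₀ hpq, hfactor]
  linarith [mul_le_mul_of_nonneg_left hsum (sq_nonneg (√p - √q))]

lemma sq_sqrt_sub_sqrt_le_poissonKL {p q : ℝ} (hp : 0 < p) (hq : 0 ≤ q) :
    (√p - √q) ^ 2 ≤ poissonKL q p := by
  unfold poissonKL
  rcases hq.lt_or_eq with hq' | rfl
  · have hsp := sq_sqrt hp.le
    have hsq := sq_sqrt hq
    have hlog : log (q / p) = 2 * log (√q / √p) := by
      rw [← sqrt_div hq, log_sqrt (by positivity)]
      ring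
    have hlog_ge : 1 - √p / √q ≤ log (√q / √p) := by
      simpa using one_sub_inv_le_log_of_pos (x := √q / √p) (by positivity)
    have hmul : q * (√p / √q) = √p * √q := by
      field_simp [(sqrt_pos.mpr hq').ne']
      linear_combination -hsq
    have hq_log_ge : q - √p * √q ≤ q * log (√q / √p) := by
      rw [← hmul, ← mul_one_sub]
      exact mul_le_mul_of_nonneg_left hlog_ge hq
    calc (√p - √q) ^ 2 = p - q + 2 * (q - √p * √q) := by rw [sub_sq, hsp, hsq]; ring
      _ ≤ p - q + q * log (q / p) := by rw [hlog]; linarith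
  · simp [sq_sqrt hp.le]

lemma two_le_four_mul_sqrt_exp_one_div_logTwoE :
    2 ≤ 4 * √(exp 1) / logTwoE := by
  have hexp : 1 ≤ √(exp 1) := one_le_sqrt.mpr (one_le_exp zero_le_one)
  rw [logTwoE, div_div_eq_mul_div, div_one]
  nlinarith [log_two_gt_d9]

/-- Poisson loss triangle condition:
`Δ(p,q) ≤ (4√e / log₂ e) · KL(Poisson(q) ‖ Poisson(p))`.
Logarithms are natural; the convention `0 · log 0 = 0` is automatic since `0 * x = 0`
and `Real.log 0 = 0` in Lean. -/
theorem stmt4 (q p : ℝ) (hq : q ∈ Set.Icc (0:ℝ) 1) (hp : p ∈ Set.Ioc (0:ℝ) 1) :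
    tdisc p q ≤ (4 * Real.sqrt (Real.exp 1) / logTwoE) *
      (p - q + q * Real.log (q / p)) := by
  have hHellinger := sq_sqrt_sub_sqrt_le_poissonKL hp.1 hq.1
  calc tdisc p q ≤ 2 * (√p - √q) ^ 2 := tdisc_le_two_mul_sq_sqrt_sub_sqrt hp.1.le hq.1
    _ ≤ 2 * poissonKL q p := by gcongr
    _ ≤ (4 * √(exp 1) / logTwoE) * poissonKL q p :=
      mul_le_mul_of_nonneg_right two_le_four_mul_sqrt_exp_one_div_logTwoE
        ((sq_nonneg _).trans hHellinger)
end

section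
/- Let X be a real-valued random variable on a probability space and b > 0. If |X| ≤ b almost surely and E[exp(−X/2)] ≤ 1, then Var(X) ≤ (b + 4)·E[X]. -/
/-!
Pointwise, `x ^ 2 ≤ (b + 4) * (x + 2 * (exp (-x / 2) - 1))` for `|x| ≤ b`: for `x < 0` this is
the quadratic Taylor bound on `exp`, and for `x ≥ 0` the Padé-type bound `(2 + u) e^{-u} ≥ 2 - u`
with `u = x / 2`. Taking expectations and using `E[exp (-X / 2)] ≤ 1` gives
`E[X²] ≤ (b + 4) E[X]`, and the variance is at most the second moment.
-/

open MeasureTheory ProbabilityTheory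

namespace Real

theorem two_sub_le_two_add_mul_exp_neg {u : ℝ} (hu : 0 ≤ u) : 2 - u ≤ (2 + u) * exp (-u) := by
  let f : ℝ → ℝ := fun v => (2 + v) * exp (-v) + v
  have hf : ∀ v, HasDerivAt f (1 - (1 + v) * exp (-v)) v := fun v => by
    have := (((hasDerivAt_id' v).const_add 2).mul (hasDerivAt_neg' v).exp).add (hasDerivAt_id' v)
    exact this.congr_deriv (by ring)
  have hf' : ∀ v, 0 ≤ 1 - (1 + v) * exp (-v) := fun v => by
    have : (1 + v) * exp (-v) ≤ exp v * exp (-v) := by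
      gcongr
      linarith [add_one_le_exp v]
    rw [← exp_add, add_neg_cancel, exp_zero] at this
    linarith
  have := monotone_of_hasDerivAt_nonneg hf hf' hu
  simp only [f, neg_zero, exp_zero] at this
  linarith

theorem sq_le_mul_add_exp_neg_half {b x : ℝ} (hx : |x| ≤ b) :
    x ^ 2 ≤ (b + 4) * (x + 2 * (exp (-x / 2) - 1)) := by
  obtain ⟨hbx, hxb⟩ := abs_le.mp hx
  rcases le_or_gt 0 x with hx0 | hx0
  · have hpade := two_sub_le_two_add_mul_exp_neg (u := x / 2) (by linarith)
    have hlin := add_one_le_exp (-x / 2)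
    rw [neg_div] at hlin ⊢
    nlinarith
  · have := quadratic_le_exp_of_nonneg (x := -x / 2) (by linarith)
    nlinarith [sq_nonneg x]

end Real

theorem integral_sq_le_of_abs_le_of_integral_exp_neg_half_le_one {Ω : Type*} [MeasurableSpace Ω]
    {μ : Measure Ω} [IsProbabilityMeasure μ] {X : Ω → ℝ} (hX : AEStronglyMeasurable X μ)
    {b : ℝ} (hbdd : ∀ᵐ ω ∂μ, |X ω| ≤ b) (hexp : ∫ ω, Real.exp (-X ω / 2) ∂μ ≤ 1) :
    ∫ ω, X ω ^ 2 ∂μ ≤ (b + 4) * ∫ ω, X ω ∂μ := by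
  have hb : 0 ≤ b := by
    obtain ⟨ω, hω⟩ := hbdd.exists
    exact (abs_nonneg _).trans hω
  have hXint : Integrable X μ := .of_bound hX b hbdd
  have hexpint : Integrable (fun ω => Real.exp (-X ω / 2)) μ := by
    refine .of_bound (by fun_prop) (Real.exp (b / 2)) ?_
    filter_upwards [hbdd] with ω hω
    rw [Real.norm_eq_abs, abs_of_pos (Real.exp_pos _), Real.exp_le_exp]
    linarith [(abs_le.mp hω).1]
  have hexp_sub_one : Integrable (fun ω => 2 * (Real.exp (-X ω / 2) - 1)) μ :=
    (hexpint.sub (integrable_const 1)).const_mul 2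
  calc ∫ ω, X ω ^ 2 ∂μ
      ≤ ∫ ω, (b + 4) * (X ω + 2 * (Real.exp (-X ω / 2) - 1)) ∂μ :=
        integral_mono_ae (MemLp.of_bound hX b hbdd).integrable_sq
          ((hXint.add hexp_sub_one).const_mul _)
          (hbdd.mono fun _ => Real.sq_le_mul_add_exp_neg_half)
    _ = (b + 4) * (∫ ω, X ω ∂μ + 2 * (∫ ω, Real.exp (-X ω / 2) ∂μ - 1)) := by
        rw [integral_const_mul, integral_add hXint hexp_sub_one, integral_const_mul,
          integral_sub hexpint (integrable_const 1), integral_const]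
        simp
    _ ≤ (b + 4) * ∫ ω, X ω ∂μ := by
        gcongr
        linarith

theorem stmt6_general {Ω : Type*} [MeasureSpace Ω] [IsProbabilityMeasure (ℙ : Measure Ω)]
    (X : Ω → ℝ) (hX : Measurable X) (b : ℝ)
    (hbdd : ∀ᵐ ω, |X ω| ≤ b)
    (hmix : (∫ ω, Real.exp (-X ω / 2)) ≤ 1) :
    variance X ℙ ≤ (b + 4) * ∫ ω, X ω :=
  (variance_le_expectation_sq hX.aestronglyMeasurable).trans
    (integral_sq_le_of_abs_le_of_integral_exp_neg_half_le_one hX.aestronglyMeasurable hbdd hmix)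

theorem stmt6 {Ω : Type*} [MeasureSpace Ω] [IsProbabilityMeasure (ℙ : Measure Ω)]
    (X : Ω → ℝ) (hX : Measurable X) (b : ℝ) (hb : 0 < b)
    (hbdd : ∀ᵐ ω, |X ω| ≤ b)
    (hmix : (∫ ω, Real.exp (-X ω / 2)) ≤ 1) :
    variance X ℙ ≤ (b + 4) * ∫ ω, X ω :=
  stmt6_general X hX b hbdd hmix
end

section
/- Let Y be a random variable on a probability space taking values in [0,1] with mean q = E[Y] ∈ (0,1), let p ∈ (0,1), and set φ = ℓ_X(Y, p) − ℓ_X(Y, q). If b > 0 and |φ| ≤ b almost surely, then Var(φ) ≤ (b + 4)·E[φ]. -/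
open MeasureTheory ProbabilityTheory

/-- The log-loss `ℓ_X(y,p) = −y·log p − (1−y)·log(1−p)` (natural logarithms). -/
noncomputable def logLoss (y p : ℝ) : ℝ := -y * Real.log p - (1 - y) * Real.log (1 - p)

/-!
Writing `φ = ℓ_X(Y, p) − ℓ_X(Y, q)`, the quantity `exp (−φ) = (p/q)^Y ((1−p)/(1−q))^(1−Y)` is a
likelihood ratio, and by convexity of `exp` it is at most `Y p/q + (1−Y)(1−p)/(1−q)`, whose mean is
`1` because `E[Y] = q`; hence `E[exp (−φ)] ≤ 1`. On `[−b, b]` the exponential satisfies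
`exp (−z) ≥ 1 − z + z²/(b+4)`, so integrating gives `E[φ²] ≤ (b+4) E[φ]`, and `Var φ ≤ E[φ²]`.
-/

lemma one_sub_add_sq_div_le_exp_neg {b z : ℝ} (hz : |z| ≤ b) :
    1 - z + z ^ 2 / (b + 4) ≤ Real.exp (-z) := by
  obtain ⟨hbz, hzb⟩ := abs_le.mp hz
  rcases le_or_gt z 2 with hz2 | hz2
  · -- `exp (−z) = exp (−z/2)² ≥ (1 − z/2)²` and `b + 4 ≥ 4`
    have half : 1 - z / 2 ≤ Real.exp (-(z / 2)) := by linarith [Real.add_one_le_exp (-(z / 2))]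
    have sq_half : (1 - z / 2) ^ 2 ≤ Real.exp (-z) := by
      rw [show -z = -(z / 2) + -(z / 2) by ring, Real.exp_add, ← sq]
      exact pow_le_pow_left₀ (by linarith) half 2
    have : z ^ 2 / (b + 4) ≤ z ^ 2 / 4 :=
      div_le_div_of_nonneg_left (sq_nonneg z) (by norm_num) (by linarith)
    nlinarith
  · have : z ^ 2 / (b + 4) ≤ z - 1 := by
      rw [div_le_iff₀ (by linarith)]
      nlinarith [mul_nonneg (by linarith : (0:ℝ) ≤ z - 2) (by linarith : (0:ℝ) ≤ b - z)]
    linarith [Real.exp_nonneg (-z)]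

lemma logLoss_sub_logLoss (y p q : ℝ) :
    logLoss y p - logLoss y q =
      -(y * (Real.log p - Real.log q) + (1 - y) * (Real.log (1 - p) - Real.log (1 - q))) := by
  unfold logLoss; ring

lemma exp_neg_logLoss_sub_le {y p q : ℝ} (hy : y ∈ Set.Icc (0:ℝ) 1)
    (hp : p ∈ Set.Ioo (0:ℝ) 1) (hq : q ∈ Set.Ioo (0:ℝ) 1) :
    Real.exp (-(logLoss y p - logLoss y q)) ≤ y * (p / q) + (1 - y) * ((1 - p) / (1 - q)) := by
  have hconv := convexOn_exp.2 (Set.mem_univ (Real.log p - Real.log q))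
    (Set.mem_univ (Real.log (1 - p) - Real.log (1 - q))) hy.1 (sub_nonneg.2 hy.2) (by ring)
  simp only [smul_eq_mul] at hconv
  rw [logLoss_sub_logLoss, neg_neg]
  rwa [Real.exp_sub, Real.exp_sub, Real.exp_log hp.1,
    Real.exp_log hq.1, Real.exp_log (sub_pos.2 hp.2), Real.exp_log (sub_pos.2 hq.2)] at hconv

lemma integral_exp_neg_logLoss_sub_le_one {Ω : Type*} [MeasurableSpace Ω] {μ : Measure Ω}
    [IsProbabilityMeasure μ] {Y : Ω → ℝ} (hY : AEStronglyMeasurable Y μ)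
    (hrange : ∀ᵐ ω ∂μ, Y ω ∈ Set.Icc (0:ℝ) 1) {p q : ℝ} (hqdef : q = ∫ ω, Y ω ∂μ)
    (hp : p ∈ Set.Ioo (0:ℝ) 1) (hq : q ∈ Set.Ioo (0:ℝ) 1) :
    ∫ ω, Real.exp (-(logLoss (Y ω) p - logLoss (Y ω) q)) ∂μ ≤ 1 := by
  have hYint : Integrable Y μ := Integrable.of_bound hY 1 <| hrange.mono fun ω h => by
    rw [Real.norm_eq_abs, abs_le]; exact ⟨by linarith [h.1], h.2⟩
  have hle := hrange.mono fun ω h => exp_neg_logLoss_sub_le h hp hq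
  have hYc : Integrable (fun ω => 1 - Y ω) μ := (integrable_const 1).sub hYint
  have hbound : Integrable (fun ω => Y ω * (p / q) + (1 - Y ω) * ((1 - p) / (1 - q))) μ :=
    (hYint.mul_const _).add (hYc.mul_const _)
  have hexp_meas : AEStronglyMeasurable
      (fun ω => Real.exp (-(logLoss (Y ω) p - logLoss (Y ω) q))) μ :=
    (by unfold logLoss; fun_prop : Continuous fun y => Real.exp (-(logLoss y p - logLoss y q)))
      |>.comp_aestronglyMeasurable hY
  have hexp_int := hbound.mono' hexp_meas <| hle.mono fun ω h => by
    rwa [Real.norm_of_nonneg (Real.exp_nonneg _)]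
  calc _ ≤ ∫ ω, Y ω * (p / q) + (1 - Y ω) * ((1 - p) / (1 - q)) ∂μ :=
        integral_mono_ae hexp_int hbound hle
    _ = q * (p / q) + (1 - q) * ((1 - p) / (1 - q)) := by
        rw [integral_add (hYint.mul_const _) (hYc.mul_const _),
          integral_mul_const, integral_mul_const, integral_sub (integrable_const 1) hYint,
          integral_const, ← hqdef]
        simp
    _ = 1 := by
        field_simp [hq.1.ne', (sub_pos.2 hq.2).ne']
        ring

lemma variance_le_mul_integral_of_integral_exp_neg_le_one {Ω : Type*} [MeasurableSpace Ω]
    {μ : Measure Ω} [IsProbabilityMeasure μ] {φ : Ω → ℝ} {b : ℝ}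
    (hφ : AEStronglyMeasurable φ μ) (hbdd : ∀ᵐ ω ∂μ, |φ ω| ≤ b)
    (hexp : ∫ ω, Real.exp (-φ ω) ∂μ ≤ 1) :
    variance φ μ ≤ (b + 4) * ∫ ω, φ ω ∂μ := by
  obtain ⟨ω₀, hω₀⟩ := hbdd.exists
  have hb4 : 0 < b + 4 := by linarith [abs_nonneg (φ ω₀)]
  have hφint : Integrable φ μ := Integrable.of_bound hφ b (by simpa only [Real.norm_eq_abs])
  have hsq_int : Integrable (fun ω => φ ω ^ 2) μ :=
    Integrable.of_bound (hφ.pow 2) (b ^ 2) <| hbdd.mono fun ω h => by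
      rw [Real.norm_eq_abs, abs_pow]; exact pow_le_pow_left₀ (abs_nonneg _) h 2
  have hexp_int : Integrable (fun ω => Real.exp (-φ ω)) μ :=
    Integrable.of_bound (Real.continuous_exp.comp_aestronglyMeasurable hφ.neg) (Real.exp b) <|
      hbdd.mono fun ω h => by
        rw [Real.norm_of_nonneg (Real.exp_nonneg _)]
        exact Real.exp_le_exp.2 (by linarith [neg_abs_le (φ ω)])
  have hφc : Integrable (fun ω => 1 - φ ω) μ := (integrable_const 1).sub hφint
  have hpoly_int : Integrable (fun ω => 1 - φ ω + φ ω ^ 2 / (b + 4)) μ :=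
    hφc.add (hsq_int.div_const _)
  have hintegrated : 1 - ∫ ω, φ ω ∂μ + (∫ ω, φ ω ^ 2 ∂μ) / (b + 4) ≤ 1 := by
    calc 1 - ∫ ω, φ ω ∂μ + (∫ ω, φ ω ^ 2 ∂μ) / (b + 4)
        = ∫ ω, 1 - φ ω + φ ω ^ 2 / (b + 4) ∂μ := by
          rw [integral_add hφc (hsq_int.div_const _),
            integral_sub (integrable_const 1) hφint, integral_div]
          simp
      _ ≤ ∫ ω, Real.exp (-φ ω) ∂μ :=
          integral_mono_ae hpoly_int hexp_int <|
            hbdd.mono fun ω h => one_sub_add_sq_div_le_exp_neg h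
      _ ≤ 1 := hexp
  calc variance φ μ ≤ ∫ ω, φ ω ^ 2 ∂μ := variance_le_expectation_sq hφ
    _ ≤ (b + 4) * ∫ ω, φ ω ∂μ := by
        rw [← div_le_iff₀' hb4]; linarith

theorem stmt7_general {Ω : Type*} [MeasureSpace Ω] [IsProbabilityMeasure (ℙ : Measure Ω)]
    (Y : Ω → ℝ) (hY : Measurable Y) (hrange : ∀ᵐ ω, Y ω ∈ Set.Icc (0:ℝ) 1)
    (q p b : ℝ) (hqdef : q = ∫ ω, Y ω) (hq : q ∈ Set.Ioo (0:ℝ) 1)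
    (hp : p ∈ Set.Ioo (0:ℝ) 1)
    (hbdd : ∀ᵐ ω, |logLoss (Y ω) p - logLoss (Y ω) q| ≤ b) :
    variance (fun ω => logLoss (Y ω) p - logLoss (Y ω) q) ℙ ≤
      (b + 4) * ∫ ω, (logLoss (Y ω) p - logLoss (Y ω) q) := by
  refine variance_le_mul_integral_of_integral_exp_neg_le_one ?_ hbdd
    (integral_exp_neg_logLoss_sub_le_one hY.aestronglyMeasurable hrange hqdef hp hq)
  unfold logLoss
  fun_prop

theorem stmt7 {Ω : Type*} [MeasureSpace Ω] [IsProbabilityMeasure (ℙ : Measure Ω)]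
    (Y : Ω → ℝ) (hY : Measurable Y) (hrange : ∀ᵐ ω, Y ω ∈ Set.Icc (0:ℝ) 1)
    (q p b : ℝ) (hqdef : q = ∫ ω, Y ω) (hq : q ∈ Set.Ioo (0:ℝ) 1)
    (hp : p ∈ Set.Ioo (0:ℝ) 1) (hb : 0 < b)
    (hbdd : ∀ᵐ ω, |logLoss (Y ω) p - logLoss (Y ω) q| ≤ b) :
    variance (fun ω => logLoss (Y ω) p - logLoss (Y ω) q) ℙ ≤
      (b + 4) * ∫ ω, (logLoss (Y ω) p - logLoss (Y ω) q) :=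
  stmt7_general Y hY hrange q p b hqdef hq hp hbdd
end

section
/- Let Y be a random variable on a probability space taking values in [0,1] with mean q = E[Y] ∈ (0,1], let p ∈ (0,1], and set φ = ℓ_P(Y, p) − ℓ_P(Y, q). If b > 0 and |φ| ≤ b almost surely, then Var(φ) ≤ (b + 2)·E[φ]. -/
open MeasureTheory ProbabilityTheory

/-- The Poisson loss `ℓ_P(y,p) = p − y·log p` (natural logarithms). -/
noncomputable def poissonLoss (y p : ℝ) : ℝ := p - y * Real.log p

open Real

/-!
Write `L = log p - log q`, so `p = q e^L`. The loss difference `φ = (p - q) - L Y` is affine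
in `Y`, with mean `q (e^L - 1 - L)` and variance `L² Var Y ≤ L² q`. For `L ≥ 0` this is at most
`2 q (e^L - 1 - L)`. For `L ≤ 0` the Padé-type bound `(2 + L) ≤ (2 - L) e^L` gives
`L² ≤ (2 - L)(e^L - 1 - L)`, which settles the case `-L ≤ b`. If `-L > b`, the Bhatia–Davis
inequality for `φ ∈ [p - q, b]` gives `Var φ ≤ -L b q` instead, and the same exponential bound
controls this.
-/

lemma two_add_le_two_sub_mul_exp {L : ℝ} (hL : L ≤ 0) : 2 + L ≤ (2 - L) * exp L := by
  rcases le_or_gt L (-2) with hL2 | hL2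
  · nlinarith [exp_pos L]
  have h2L : 0 < 2 + L := by linarith
  -- at `x = -2L / (2 + L)`, `2x / (x + 2) ≤ log (1 + x)` reads `-L ≤ log ((2 - L) / (2 + L))`
  have h := le_log_one_add_of_nonneg (div_nonneg (by linarith : 0 ≤ -2 * L) h2L.le)
  have e1 : 2 * (-2 * L / (2 + L)) / (-2 * L / (2 + L) + 2) = -L := by field_simp; ring
  have e2 : 1 + -2 * L / (2 + L) = (2 - L) / (2 + L) := by field_simp; ring
  rw [e1, e2, le_log_iff_exp_le (div_pos (by linarith) h2L), le_div_iff₀ h2L, exp_neg] at h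
  have := exp_pos L
  field_simp at h
  linarith

lemma sq_le_two_mul_exp_sub_one_sub {L : ℝ} (hL : 0 ≤ L) : L ^ 2 ≤ 2 * (exp L - 1 - L) := by
  linarith [quadratic_le_exp_of_nonneg hL]

lemma sq_le_two_sub_mul_exp_sub_one_sub {L : ℝ} (hL : L ≤ 0) :
    L ^ 2 ≤ (2 - L) * (exp L - 1 - L) := by
  linear_combination two_add_le_two_sub_mul_exp hL

lemma neg_mul_le_add_two_mul_exp_sub_one_sub {L b : ℝ} (hL : L ≤ 0) (hb : 0 ≤ b + 2)
    (hbL : b ≤ -L) :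
    -L * b ≤ (b + 2) * (exp L - 1 - L) := by
  have h := sq_le_two_sub_mul_exp_sub_one_sub hL
  have : (2 - L) * (-L * b) ≤ (2 - L) * ((b + 2) * (exp L - 1 - L)) :=
    calc (2 - L) * (-L * b) ≤ (b + 2) * L ^ 2 := by nlinarith
      _ ≤ (b + 2) * ((2 - L) * (exp L - 1 - L)) := by gcongr
      _ = _ := by ring
  exact le_of_mul_le_mul_left this (by linarith)

lemma variance_le_integral_of_mem_Icc_zero_one {Ω : Type*} [MeasurableSpace Ω] {μ : Measure Ω}
    [IsProbabilityMeasure μ] {Y : Ω → ℝ} (hY : AEMeasurable Y μ)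
    (h : ∀ᵐ ω ∂μ, Y ω ∈ Set.Icc 0 1) : Var[Y; μ] ≤ μ[Y] := by
  nlinarith [variance_le_sub_mul_sub h hY, sq_nonneg μ[Y]]

theorem stmt8 {Ω : Type*} [MeasureSpace Ω] [IsProbabilityMeasure (ℙ : Measure Ω)]
    (Y : Ω → ℝ) (hY : Measurable Y) (hrange : ∀ᵐ ω, Y ω ∈ Set.Icc (0:ℝ) 1)
    (q p b : ℝ) (hqdef : q = ∫ ω, Y ω) (hq : q ∈ Set.Ioc (0:ℝ) 1)
    (hp : p ∈ Set.Ioc (0:ℝ) 1) (hb : 0 < b)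
    (hbdd : ∀ᵐ ω, |poissonLoss (Y ω) p - poissonLoss (Y ω) q| ≤ b) :
    variance (fun ω => poissonLoss (Y ω) p - poissonLoss (Y ω) q) ℙ ≤
      (b + 2) * ∫ ω, (poissonLoss (Y ω) p - poissonLoss (Y ω) q) := by
  set L := log p - log q
  have hq0 : 0 ≤ q := hq.1.le
  have hpq : p = q * exp L := by
    rw [exp_sub, exp_log hp.1, exp_log hq.1, mul_div_cancel₀ _ hq.1.ne']
  have hφ (ω : Ω) : poissonLoss (Y ω) p - poissonLoss (Y ω) q = (p - q) - L * Y ω := by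
    simp only [poissonLoss]; ring
  simp only [hφ] at hbdd ⊢
  have hYint : Integrable Y := Integrable.of_mem_Icc 0 1 hY.aemeasurable hrange
  have hmean : ∫ ω, ((p - q) - L * Y ω) = q * (exp L - 1 - L) := by
    rw [integral_sub (integrable_const _) (hYint.const_mul L), integral_const,
      integral_const_mul, ← hqdef, hpq]
    simp only [probReal_univ, smul_eq_mul, one_mul]; ring
  have hvar : Var[fun ω => (p - q) - L * Y ω] ≤ L ^ 2 * q := by
    rw [variance_const_sub (by fun_prop), variance_const_mul, hqdef]
    gcongr
    exact variance_le_integral_of_mem_Icc_zero_one hY.aemeasurable hrange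
  have hψ : 0 ≤ exp L - 1 - L := by linarith [add_one_le_exp L]
  rw [hmean]
  rcases le_total 0 L with hL | hL
  · calc _ ≤ L ^ 2 * q := hvar
      _ ≤ 2 * (exp L - 1 - L) * q :=
        mul_le_mul_of_nonneg_right (sq_le_two_mul_exp_sub_one_sub hL) hq0
      _ ≤ _ := by nlinarith [mul_nonneg (mul_nonneg hb.le hq0) hψ]
  rcases le_total (-L) b with hLb | hbL
  · calc _ ≤ L ^ 2 * q := hvar
      _ ≤ (2 - L) * (exp L - 1 - L) * q :=
        mul_le_mul_of_nonneg_right (sq_le_two_sub_mul_exp_sub_one_sub hL) hq0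
      _ ≤ _ := by nlinarith [mul_nonneg (mul_nonneg (by linarith : 0 ≤ b + L) hq0) hψ]
  have hrange' : ∀ᵐ ω, (p - q) - L * Y ω ∈ Set.Icc (p - q) b := by
    filter_upwards [hrange, hbdd] with ω hYω hφω
    exact ⟨by nlinarith [hYω.1], (abs_le.1 hφω).2⟩
  have hBD := variance_le_sub_mul_sub hrange' (by fun_prop)
  rw [hmean] at hBD
  calc _ ≤ (b - q * (exp L - 1 - L)) * (q * (exp L - 1 - L) - (p - q)) := hBD
    _ ≤ -L * b * q := by
      rw [hpq]; nlinarith [mul_nonneg (mul_nonneg hq0 hψ) (mul_nonneg (neg_nonneg.2 hL) hq0)]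
    _ ≤ (b + 2) * (exp L - 1 - L) * q := mul_le_mul_of_nonneg_right
        (neg_mul_le_add_two_mul_exp_sub_one_sub hL (by linarith) hbL) hq0
    _ = _ := by ring
end

section
/- Let (Ω, F, (F_t)_{t∈ℕ}, P) be a filtered probability space and (X_t)_{t≥1} a real-valued process adapted to (F_t)_{t≥1} with each X_t square-integrable, and let b > 0 satisfy X_t − E[X_t | F_{t−1}] ≤ b almost surely for all t ≥ 1. Define S_t = ∑_{i=1}^t (X_i − E[X_i | F_{i−1}]) and V_t = ∑_{i=1}^t Var(X_i | F_{i−1}), with S₀ = V₀ = 0. Then for every λ ∈ [0, 3/b), the process M_t(λ) = exp( λ·S_t − (λ² / (2·(1 − (b/3)·λ)))·V_t ), t ≥ 0, is a supermartingale with respect to (F_t) with M₀(λ) = 1. -/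
/-!
For `y ≤ c` with `0 ≤ c < 3` one has `exp y ≤ 1 + y + y² / (2 (1 - c/3))`: for `y ≤ 0` this is
the quadratic Taylor bound, and for `y ≥ 0` the tail `∑ yⁿ⁺² / (n+2)!` is dominated by
`y²/2 ∑ (c/3)ⁿ` because `(n+2)! ≥ 2·3ⁿ`. Applied conditionally to `λ D` with `D = X - E[X | F]`,
whose conditional mean vanishes, and `c = λ b`, it gives
`E[exp (λ D) | F] ≤ 1 + ψ Var(X | F) ≤ exp (ψ Var(X | F))` with `ψ = λ² / (2 (1 - bλ/3))`.
So every multiplicative increment `exp (λ D - ψ Var(X | F))` of `M` has conditional expectation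
at most `1`, which is the supermartingale property.
-/

open MeasureTheory ProbabilityTheory
open scoped Nat

lemma two_mul_three_pow_le_factorial (n : ℕ) : 2 * 3 ^ n ≤ (n + 2)! := by
  induction n with
  | zero => simp [Nat.factorial]
  | succ n ih =>
    calc 2 * 3 ^ (n + 1) = 3 * (2 * 3 ^ n) := by ring
    _ ≤ (n + 3) * (n + 2)! := Nat.mul_le_mul (by omega) ih
    _ = (n + 3)! := rfl

namespace Real

lemma exp_le_one_add_add_sq_div_two {y : ℝ} (hy : y ≤ 0) : exp y ≤ 1 + y + y ^ 2 / 2 := by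
  have hneg : 1 - y + y ^ 2 / 2 ≤ exp (-y) := by
    simpa [sub_eq_add_neg] using quadratic_le_exp_of_nonneg (neg_nonneg.2 hy)
  have hpos : 0 < 1 - y + y ^ 2 / 2 := by nlinarith
  calc exp y = (exp (-y))⁻¹ := by rw [exp_neg, inv_inv]
  _ ≤ (1 - y + y ^ 2 / 2)⁻¹ := inv_anti₀ hpos hneg
  _ ≤ 1 + y + y ^ 2 / 2 := by
      -- `(1 + y + y²/2)(1 - y + y²/2) = 1 + y⁴/4`
      rw [inv_le_iff_one_le_mul₀ hpos]
      nlinarith [sq_nonneg (y ^ 2)]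

lemma exp_le_one_add_add_sq_div_of_le {y c : ℝ} (hy : 0 ≤ y) (hyc : y ≤ c) (hc : c < 3) :
    exp y ≤ 1 + y + y ^ 2 / (2 * (1 - c / 3)) := by
  have hq : 0 ≤ c / 3 := by linarith
  have hq1 : c / 3 < 1 := by linarith
  -- the Taylor tail `∑ yⁿ⁺²/(n+2)!` is dominated by the geometric series `y²/2 ∑ (c/3)ⁿ`
  have hterm (n : ℕ) : y ^ (n + 2) / (n + 2)! ≤ y ^ 2 / 2 * (c / 3) ^ n := by
    have hfac : (2 * 3 ^ n : ℝ) ≤ (n + 2)! := by exact_mod_cast two_mul_three_pow_le_factorial n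
    calc y ^ (n + 2) / (n + 2)! ≤ y ^ 2 * c ^ n / (2 * 3 ^ n) := by
          rw [pow_add, mul_comm (y ^ n)]
          gcongr
          exact mul_nonneg (sq_nonneg y) (pow_nonneg (hy.trans hyc) n)
    _ = y ^ 2 / 2 * (c / 3) ^ n := by rw [div_pow]; field_simp
  have hsum := summable_pow_div_factorial y
  have hgeo := (summable_geometric_of_lt_one hq hq1).mul_left (y ^ 2 / 2)
  calc exp y = ∑ i ∈ Finset.range 2, y ^ i / i ! + ∑' n : ℕ, y ^ (n + 2) / (n + 2)! := by
        rw [exp_eq_exp_ℝ, NormedSpace.exp_eq_tsum_div, hsum.sum_add_tsum_nat_add 2]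
  _ ≤ 1 + y + ∑' n : ℕ, y ^ 2 / 2 * (c / 3) ^ n := by
        refine add_le_add (by simp [Finset.sum_range_succ]) ?_
        exact (hsum.comp_injective (add_left_injective 2)).tsum_le_tsum hterm hgeo
  _ = 1 + y + y ^ 2 / (2 * (1 - c / 3)) := by
        rw [tsum_mul_left, tsum_geometric_of_lt_one hq hq1]
        field_simp

lemma exp_le_one_add_add_sq_div {y c : ℝ} (hc0 : 0 ≤ c) (hc : c < 3) (hy : y ≤ c) :
    exp y ≤ 1 + y + y ^ 2 / (2 * (1 - c / 3)) := by
  rcases le_total y 0 with hy0 | hy0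
  · calc exp y ≤ 1 + y + y ^ 2 / 2 := exp_le_one_add_add_sq_div_two hy0
    _ ≤ 1 + y + y ^ 2 / (2 * (1 - c / 3)) := by
        gcongr
        · linarith
        · linarith
  · exact exp_le_one_add_add_sq_div_of_le hy0 hy hc

end Real

noncomputable def bernsteinPsi (b lam : ℝ) : ℝ := lam ^ 2 / (2 * (1 - b / 3 * lam))

section Bernstein

variable {b lam : ℝ}

lemma bernsteinPsi_nonneg (hlam : lam * b < 3) : 0 ≤ bernsteinPsi b lam := by
  unfold bernsteinPsi
  have : 0 < 1 - b / 3 * lam := by linarith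
  positivity

lemma exp_mul_le_one_add_add_bernsteinPsi_mul_sq (hb : 0 ≤ b) (hlam0 : 0 ≤ lam)
    (hlam : lam * b < 3) {x : ℝ} (hx : x ≤ b) :
    Real.exp (lam * x) ≤ 1 + lam * x + bernsteinPsi b lam * x ^ 2 := by
  have h := Real.exp_le_one_add_add_sq_div (mul_nonneg hlam0 hb) hlam
    (mul_le_mul_of_nonneg_left hx hlam0)
  have hden : 1 - b / 3 * lam ≠ 0 := by linarith
  convert h using 2
  unfold bernsteinPsi
  field_simp

end Bernstein

section CondExp

variable {Ω : Type*} {m m0 : MeasurableSpace Ω} {μ : Measure Ω}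

lemma integrable_exp_of_ae_le [IsFiniteMeasure μ] {f : Ω → ℝ} (hf : AEStronglyMeasurable f μ)
    {c : ℝ} (hfc : ∀ᵐ ω ∂μ, f ω ≤ c) : Integrable (fun ω => Real.exp (f ω)) μ := by
  refine .mono' (integrable_const (Real.exp c))
    (Real.continuous_exp.comp_aestronglyMeasurable hf) ?_
  filter_upwards [hfc] with ω hω
  rw [Real.norm_eq_abs, Real.abs_exp]
  exact Real.exp_le_exp.2 hω

lemma condExp_sub_condExp_ae_eq_zero [IsFiniteMeasure μ] (hm : m ≤ m0) {X : Ω → ℝ}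
    (hX : Integrable X μ) : μ[X - μ[X | m] | m] =ᵐ[μ] 0 := by
  filter_upwards [condExp_sub hX (integrable_condExp (m := m) (f := X)) m,
    condExp_condExp_of_le (μ := μ) (f := X) le_rfl hm] with ω h1 h2
  rw [h1, Pi.sub_apply, h2, sub_self, Pi.zero_apply]

lemma condVar_nonneg (X : Ω → ℝ) : 0 ≤ᵐ[μ] Var[X; μ | m] :=
  condExp_nonneg (ae_of_all _ fun ω => sq_nonneg ((X - μ[X | m]) ω))

variable {b lam : ℝ} [IsFiniteMeasure μ]

lemma condExp_exp_mul_le_one_add_bernsteinPsi_mul (hm : m ≤ m0) {D : Ω → ℝ} (hD : MemLp D 2 μ)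
    (hD0 : μ[D | m] =ᵐ[μ] 0) (hb : 0 ≤ b) (hlam0 : 0 ≤ lam) (hlam : lam * b < 3)
    (hDb : ∀ᵐ ω ∂μ, D ω ≤ b) :
    μ[fun ω => Real.exp (lam * D ω) | m]
      ≤ᵐ[μ] fun ω => 1 + bernsteinPsi b lam * μ[D ^ 2 | m] ω := by
  have hDint : Integrable D μ := hD.integrable one_le_two
  have hDsq : Integrable (D ^ 2) μ := hD.integrable_sq
  have hexp : Integrable (fun ω => Real.exp (lam * D ω)) μ :=
    integrable_exp_of_ae_le (hDint.1.const_mul lam) <| by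
      filter_upwards [hDb] with ω hω using mul_le_mul_of_nonneg_left hω hlam0
  have hmono := condExp_mono (m := m) hexp
    ((integrable_const 1).add ((hDint.smul lam).add (hDsq.smul (bernsteinPsi b lam)))) <| by
    filter_upwards [hDb] with ω hω
    simp only [Pi.add_apply, Pi.smul_apply, Pi.pow_apply, smul_eq_mul]
    linarith [exp_mul_le_one_add_add_bernsteinPsi_mul_sq hb hlam0 hlam hω]
  filter_upwards [hmono, condExp_add (integrable_const 1)
      ((hDint.smul lam).add (hDsq.smul (bernsteinPsi b lam))) m,
    condExp_add (hDint.smul lam) (hDsq.smul (bernsteinPsi b lam)) m,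
    condExp_smul (μ := μ) lam D m, condExp_smul (μ := μ) (bernsteinPsi b lam) (D ^ 2) m, hD0]
    with ω h1 h2 h3 h4 h5 h6
  simp only [Pi.add_apply, Pi.smul_apply, Pi.zero_apply, smul_eq_mul, condExp_const hm]
    at h1 h2 h3 h4 h5 h6 ⊢
  rw [h2, h3, h4, h5, h6] at h1
  linarith

lemma condExp_exp_bernstein_le_one (hm : m ≤ m0) {X : Ω → ℝ} (hX : MemLp X 2 μ) (hb : 0 ≤ b)
    (hlam0 : 0 ≤ lam) (hlam : lam * b < 3) (hXb : ∀ᵐ ω ∂μ, X ω - μ[X | m] ω ≤ b) :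
    μ[fun ω => Real.exp (lam * (X ω - μ[X | m] ω) - bernsteinPsi b lam * Var[X; μ | m] ω) | m]
      ≤ᵐ[μ] 1 := by
  set ψ := bernsteinPsi b lam
  set V := Var[X; μ | m]
  set E := fun ω => Real.exp (lam * (X ω - μ[X | m] ω))
  have hD : MemLp (X - μ[X | m]) 2 μ := hX.sub (hX.condExp one_le_two)
  have hfactor : (fun ω => Real.exp (lam * (X ω - μ[X | m] ω) - ψ * V ω)) =
      (fun ω => Real.exp (-(ψ * V ω))) * E := by
    ext ω
    rw [Pi.mul_apply, ← Real.exp_add, neg_add_eq_sub]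
  have hint : Integrable (fun ω => Real.exp (lam * (X ω - μ[X | m] ω) - ψ * V ω)) μ :=
    integrable_exp_of_ae_le (c := lam * b)
      ((hD.1.const_mul lam).sub (integrable_condVar.1.const_mul ψ)) <| by
      filter_upwards [hXb, condVar_nonneg X] with ω hω hV
      have := mul_nonneg (bernsteinPsi_nonneg (b := b) hlam) hV
      linarith [mul_le_mul_of_nonneg_left hω hlam0]
  have hE : Integrable E μ := integrable_exp_of_ae_le (hD.1.const_mul lam) <| by
    filter_upwards [hXb] with ω hω using mul_le_mul_of_nonneg_left hω hlam0
  have hmeas : StronglyMeasurable[m] fun ω => Real.exp (-(ψ * V ω)) :=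
    Real.continuous_exp.comp_stronglyMeasurable (stronglyMeasurable_condVar.const_mul ψ).neg
  rw [hfactor] at hint ⊢
  filter_upwards [condExp_mul_of_stronglyMeasurable_left hmeas hint hE,
    condExp_exp_mul_le_one_add_bernsteinPsi_mul hm hD
      (condExp_sub_condExp_ae_eq_zero hm (hX.integrable one_le_two)) hb hlam0 hlam hXb]
    with ω hpull hle
  rw [hpull, Pi.mul_apply, Pi.one_apply]
  calc Real.exp (-(ψ * V ω)) * μ[E | m] ω ≤ Real.exp (-(ψ * V ω)) * Real.exp (ψ * V ω) := by
        gcongr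
        exact hle.trans ((add_comm _ _).trans_le (Real.add_one_le_exp _))
  _ = 1 := by rw [← Real.exp_add, neg_add_cancel, Real.exp_zero]

end CondExp

section Supermartingale

variable {Ω : Type*} {m0 : MeasurableSpace Ω} {μ : Measure Ω} [IsFiniteMeasure μ]
  {𝒢 : Filtration ℕ m0} {Z : ℕ → Ω → ℝ}

lemma supermartingale_exp_sum_of_condExp_exp_le_one
    (hZ : ∀ t, StronglyMeasurable[𝒢 (t + 1)] (Z (t + 1)))
    (hZbdd : ∀ t, ∃ C, ∀ᵐ ω ∂μ, Z (t + 1) ω ≤ C)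
    (hZexp : ∀ t, μ[fun ω => Real.exp (Z (t + 1) ω) | 𝒢 t] ≤ᵐ[μ] 1) :
    Supermartingale (fun t ω => Real.exp (∑ i ∈ Finset.Icc 1 t, Z i ω)) 𝒢 μ := by
  set M : ℕ → Ω → ℝ := fun t ω => Real.exp (∑ i ∈ Finset.Icc 1 t, Z i ω)
  have hM_succ (t : ℕ) : M (t + 1) = M t * fun ω => Real.exp (Z (t + 1) ω) := by
    ext ω
    simp only [M, Pi.mul_apply, Finset.sum_Icc_succ_top (Nat.le_add_left 1 t), Real.exp_add]
  have hadapted : StronglyAdapted 𝒢 M := fun t =>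
    Real.continuous_exp.comp_stronglyMeasurable <| Finset.stronglyMeasurable_fun_sum _
      fun i hi => by
        obtain ⟨j, rfl⟩ := Nat.exists_eq_add_of_le' (Finset.mem_Icc.1 hi).1
        exact (hZ j).mono (𝒢.mono (Finset.mem_Icc.1 hi).2)
  have hexpZ (t : ℕ) : Integrable (fun ω => Real.exp (Z (t + 1) ω)) μ := by
    obtain ⟨C, hC⟩ := hZbdd t
    exact integrable_exp_of_ae_le ((hZ t).mono (𝒢.le _)).aestronglyMeasurable hC
  have hint (t : ℕ) : Integrable (M t) μ := by
    induction t with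
    | zero => simp [M]
    | succ t ih =>
      obtain ⟨C, hC⟩ := hZbdd t
      rw [hM_succ]
      refine ih.mul_bdd (hexpZ t).1 (c := Real.exp C) ?_
      filter_upwards [hC] with ω hω
      rw [Real.norm_eq_abs, Real.abs_exp]
      exact Real.exp_le_exp.2 hω
  refine supermartingale_nat hadapted hint fun t => ?_
  rw [hM_succ]
  filter_upwards [condExp_mul_of_stronglyMeasurable_left (hadapted t)
    (hM_succ t ▸ hint (t + 1)) (hexpZ t), hZexp t] with ω hpull hle
  rw [hpull, Pi.mul_apply]
  calc M t ω * μ[fun ω => Real.exp (Z (t + 1) ω) | 𝒢 t] ω ≤ M t ω * 1 :=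
        mul_le_mul_of_nonneg_left hle (Real.exp_nonneg _)
  _ = M t ω := mul_one _

end Supermartingale

/-- The exponential process `exp(λ·S_t − ψ(λ)·V_t)` of a martingale-difference sum with
increments bounded above by `b`, with `ψ(λ) = λ²/(2(1 − (b/3)λ))`, is a supermartingale
starting at `1`, for every `λ ∈ [0, 3/b)`. -/
theorem stmt9 {Ω : Type*} {m0 : MeasurableSpace Ω} (μ : Measure Ω) [IsProbabilityMeasure μ]
    (𝒢 : Filtration ℕ m0) (X : ℕ → Ω → ℝ)
    (hadapt : ∀ t, 1 ≤ t → StronglyMeasurable[𝒢 t] (X t))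
    (hL2 : ∀ t, 1 ≤ t → MemLp (X t) 2 μ)
    (b : ℝ) (hb : 0 < b)
    (hbdd : ∀ t, 1 ≤ t → ∀ᵐ ω ∂μ, X t ω - (μ[X t | 𝒢 (t - 1)]) ω ≤ b)
    (S V : ℕ → Ω → ℝ)
    (hS : ∀ t ω, S t ω = ∑ i ∈ Finset.Icc 1 t, (X i ω - (μ[X i | 𝒢 (i - 1)]) ω))
    (hV : ∀ t ω, V t ω =
      ∑ i ∈ Finset.Icc 1 t,
        (μ[fun ω' => (X i ω' - (μ[X i | 𝒢 (i - 1)]) ω')^2 | 𝒢 (i - 1)]) ω)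
    (lam : ℝ) (hlam0 : 0 ≤ lam) (hlam1 : lam < 3 / b) :
    Supermartingale
        (fun t ω => Real.exp (lam * S t ω - lam^2 / (2 * (1 - (b / 3) * lam)) * V t ω)) 𝒢 μ
      ∧ ∀ ω, Real.exp (lam * S 0 ω - lam^2 / (2 * (1 - (b / 3) * lam)) * V 0 ω) = 1 := by
  have hlam : lam * b < 3 := (lt_div_iff₀ hb).mp hlam1
  set Z : ℕ → Ω → ℝ := fun i ω =>
    lam * (X i ω - μ[X i | 𝒢 (i - 1)] ω) - bernsteinPsi b lam * Var[X i; μ | 𝒢 (i - 1)] ω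
  have hsum (t : ℕ) (ω : Ω) : lam * S t ω - bernsteinPsi b lam * V t ω =
      ∑ i ∈ Finset.Icc 1 t, Z i ω := by
    simp only [hS, hV, Z, Finset.mul_sum, ← Finset.sum_sub_distrib]
    rfl
  refine ⟨?_, fun ω => by simp [hS, hV]⟩
  change Supermartingale (fun t ω => Real.exp (lam * S t ω - bernsteinPsi b lam * V t ω)) 𝒢 μ
  simp only [hsum]
  refine supermartingale_exp_sum_of_condExp_exp_le_one (fun t => ?_) (fun t => ⟨lam * b, ?_⟩)
    fun t => condExp_exp_bernstein_le_one (𝒢.le t) (hL2 _ t.succ_pos) hb.le hlam0 hlam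
      (hbdd _ t.succ_pos)
  · have hD := (hadapt _ t.succ_pos).sub
      ((stronglyMeasurable_condExp (f := X (t + 1)) (μ := μ)).mono (𝒢.mono t.le_succ))
    exact (hD.const_mul _).sub ((stronglyMeasurable_condVar.mono (𝒢.mono t.le_succ)).const_mul _)
  · filter_upwards [hbdd _ t.succ_pos, condVar_nonneg (X (t + 1))] with ω hω hV0
    have := mul_nonneg (bernsteinPsi_nonneg (b := b) hlam) hV0
    simp only [Z]
    linarith [mul_le_mul_of_nonneg_left hω hlam0]
end

section
/- Let (Ω, F, (F_t)_{t∈ℕ}, P) be a filtered probability space, c > 0, and let (S_t)_{t≥0} and (V_t)_{t≥0} be adapted processes with S_t real-valued and V_t nonnegative. Suppose that for every λ ∈ [0, 1/c) there exists a supermartingale (L_t(λ))_{t≥0} with respect to (F_t) with E[L₀(λ)] ≤ 1 and exp( λ·S_t − (λ²/(2·(1 − c·λ)))·V_t ) ≤ L_t(λ) almost surely for all t ≥ 0. Then for any ρ > 0 and δ ∈ (0,1), with probability at least 1 − δ, for all t ≥ 1: S_t ≤ 4·√(V_t · log(H_t/δ)) + 11·(c + ρ)·log(H_t/δ), where H_t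 = log(1 + V_t/ρ²) + e. -/
/-!
Peeling. Split the range of `V` into epochs `e ^ k ≤ 1 + V / ρ ^ 2 < e ^ (k + 1)` and, for
epoch `k`, use the supermartingale `L(λₖ)` with `λₖ` tuned to the largest value of `V` in that
epoch. By Ville's inequality `L(λₖ)` ever reaches `(k + 1) (k + 2) / δ` with probability at most
`δ / ((k + 1) (k + 2))`, and these budgets sum to `δ`. Off that event,
`λₖ S_t - ψ(λₖ) V_t ≤ log ((k + 1) (k + 2) / δ)` for all `k` and `t`, where
`ψ(λ) = λ² / (2 (1 - c λ))`; taking `k` to be the epoch of `V_t` and inverting this bound gives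
the claim.
-/

open MeasureTheory Real

namespace MeasureTheory.Supermartingale

variable {Ω : Type*} {m0 : MeasurableSpace Ω} {μ : Measure Ω} [IsFiniteMeasure μ]
  {𝒢 : Filtration ℕ m0} {L : ℕ → Ω → ℝ} {ε : ℝ}

lemma mul_measureReal_exists_le_le_integral (hL : Supermartingale L 𝒢 μ)
    (hnonneg : ∀ t, 0 ≤ᵐ[μ] L t) (n : ℕ) :
    ε * μ.real {ω | ∃ k ≤ n, ε ≤ L k ω} ≤ ∫ ω, L 0 ω ∂μ := by
  set τ : Ω → WithTop ℕ := fun ω => (hittingBtwn L (Set.Ici ε) 0 n ω : ℕ)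
  have hτ : IsStoppingTime 𝒢 τ :=
    hL.stronglyAdapted.adapted.isStoppingTime_hittingBtwn measurableSet_Ici
  have hτn : ∀ ω, τ ω ≤ n := fun ω => WithTop.coe_le_coe.2 (hittingBtwn_le ω)
  have hint : Integrable (stoppedValue L τ) μ := integrable_stoppedValue ℕ hτ hL.integrable hτn
  have hE : MeasurableSet {ω | ∃ k ≤ n, ε ≤ L k ω} := by
    have : {ω | ∃ k ≤ n, ε ≤ L k ω} = ⋃ k ≤ n, {ω | ε ≤ L k ω} := by ext; simp
    rw [this]
    exact .biUnion (Set.to_countable _) fun k _ =>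
      measurableSet_le measurable_const ((hL.stronglyMeasurable k).measurable.le (𝒢.le k))
  have hstopped_nonneg : 0 ≤ᵐ[μ] stoppedValue L τ := by
    filter_upwards [ae_all_iff.2 hnonneg] with ω hω using hω _
  calc ε * μ.real {ω | ∃ k ≤ n, ε ≤ L k ω}
      ≤ ∫ ω in {ω | ∃ k ≤ n, ε ≤ L k ω}, stoppedValue L τ ω ∂μ := by
        rw [mul_comm, ← smul_eq_mul]
        refine setIntegral_ge_of_const_le hE (measure_ne_top _ _) ?_ hint.integrableOn
        rintro ω ⟨k, hkn, hk⟩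
        exact stoppedValue_hittingBtwn_mem ⟨k, ⟨k.zero_le, hkn⟩, hk⟩
    _ ≤ ∫ ω, stoppedValue L τ ω ∂μ := setIntegral_le_integral hint hstopped_nonneg
    _ ≤ ∫ ω, L 0 ω ∂μ := by
        -- optional stopping, applied to the submartingale `-L`
        have := hL.neg.expected_stoppedValue_mono (isStoppingTime_const 𝒢 0) hτ
          (fun ω => WithTop.coe_le_coe.2 (Nat.zero_le _)) hτn
        simp only [stoppedValue, Pi.neg_apply, integral_neg, WithTop.untopD_coe] at this ⊢
        linarith

lemma ville_ineq (hL : Supermartingale L 𝒢 μ) (hnonneg : ∀ t, 0 ≤ᵐ[μ] L t) (hε : 0 < ε) :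
    μ {ω | ∃ t, ε ≤ L t ω} ≤ ENNReal.ofReal ((∫ ω, L 0 ω ∂μ) / ε) := by
  rw [Set.ofPred_exists, measure_iUnion_eq_iSup_accumulate]
  refine iSup_le fun n => ?_
  have hacc : Set.accumulate (fun t => {ω | ε ≤ L t ω}) n = {ω | ∃ k ≤ n, ε ≤ L k ω} := by
    ext; simp [Set.mem_accumulate]
  rw [hacc, ← ofReal_measureReal]
  exact ENNReal.ofReal_le_ofReal
    ((le_div_iff₀' hε).2 (hL.mul_measureReal_exists_le_le_integral hnonneg n))

end MeasureTheory.Supermartingale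

lemma sum_range_div_succ_mul_succ (δ : ℝ) (n : ℕ) :
    ∑ k ∈ Finset.range n, δ / ((k + 1) * (k + 2)) = δ - δ / (n + 1) := by
  induction n with
  | zero => simp
  | succ n ih =>
    rw [Finset.sum_range_succ, ih]
    push_cast
    field_simp
    ring

lemma tsum_ofReal_div_succ_mul_succ_le {δ : ℝ} (hδ : 0 ≤ δ) :
    ∑' k : ℕ, ENNReal.ofReal (δ / ((k + 1) * (k + 2))) ≤ ENNReal.ofReal δ := by
  refine ENNReal.tsum_le_of_sum_range_le fun n => ?_
  rw [← ENNReal.ofReal_sum_of_nonneg fun k _ => by positivity, sum_range_div_succ_mul_succ]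
  exact ENNReal.ofReal_le_ofReal (sub_le_self _ (by positivity))

lemma le_of_subGamma_exponent_le {c s A S V : ℝ} (hc : 0 ≤ c) (hs : 0 < s)
    (h : 1 / (c + s) * S - (1 / (c + s)) ^ 2 / (2 * (1 - c * (1 / (c + s)))) * V ≤ A) :
    S ≤ (c + s) * A + V / (2 * s) := by
  have hcs : 0 < c + s := by linarith
  have hs0 : s ≠ 0 := hs.ne'
  have hψ : (1 / (c + s)) ^ 2 / (2 * (1 - c * (1 / (c + s)))) = 1 / (c + s) * (1 / (2 * s)) := by
    rw [show 1 - c * (1 / (c + s)) = s / (c + s) by field_simp; ring]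
    field_simp
  rw [hψ, mul_assoc, ← mul_sub, one_div_mul_eq_div, div_le_iff₀ hcs] at h
  have : V * (1 / (2 * s)) = V / (2 * s) := by ring
  linarith

lemma le_add_sqrt_of_subGamma_exponent_le {c A W S V : ℝ} (hc : 0 ≤ c) (hA : 0 < A) (hW : 0 < W)
    (hVW : V ≤ W)
    (h : 1 / (c + √(W / (2 * A))) * S -
      (1 / (c + √(W / (2 * A)))) ^ 2 / (2 * (1 - c * (1 / (c + √(W / (2 * A)))))) * V ≤ A) :
    S ≤ c * A + √(2 * A * W) := by
  set s := √(W / (2 * A))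
  have hs : 0 < s := Real.sqrt_pos.2 (by positivity)
  have hs2 : 2 * A * s ^ 2 = W := by
    rw [Real.sq_sqrt (by positivity)]
    field_simp
  have hsqrt : √(2 * A * W) = 2 * A * s := by
    rw [← hs2, show 2 * A * (2 * A * s ^ 2) = (2 * A * s) ^ 2 by ring]
    exact Real.sqrt_sq (by positivity)
  have hVs : V / (2 * s) ≤ A * s := by
    rw [div_le_iff₀ (by positivity)]
    nlinarith
  have := le_of_subGamma_exponent_le hc hs h
  rw [hsqrt]
  nlinarith

/- On epoch `k`, `V ≤ epochVarBound ρ k`; `epochLam` minimises the bound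
`(c + s) A + W / (2 s)` of `le_of_subGamma_exponent_le` over `λ = 1 / (c + s)`
at `A = epochLevel δ k`, `W = epochVarBound ρ k`. -/

noncomputable def epochLevel (δ : ℝ) (k : ℕ) : ℝ := log ((k + 1) * (k + 2) / δ)

noncomputable def epochVarBound (ρ : ℝ) (k : ℕ) : ℝ := ρ ^ 2 * (exp (k + 1) - 1)

noncomputable def epochLam (c ρ δ : ℝ) (k : ℕ) : ℝ :=
  1 / (c + √(epochVarBound ρ k / (2 * epochLevel δ k)))

lemma epochLevel_pos {δ : ℝ} (hδ0 : 0 < δ) (hδ1 : δ ≤ 1) (k : ℕ) : 0 < epochLevel δ k := by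
  refine log_pos ((one_lt_div hδ0).2 ?_)
  nlinarith [k.cast_nonneg (α := ℝ)]

lemma epochVarBound_pos {ρ : ℝ} (hρ : ρ ≠ 0) (k : ℕ) : 0 < epochVarBound ρ k := by
  have : 1 < exp (k + 1) := one_lt_exp_iff.2 (by positivity)
  exact mul_pos (by positivity) (by linarith)

lemma epochLevel_floor_le {δ x : ℝ} (hδ0 : 0 < δ) (hδ1 : δ ≤ 1) (hx : 0 ≤ x) :
    epochLevel δ ⌊x⌋₊ ≤ 2 * log ((x + exp 1) / δ) := by
  have hk : (⌊x⌋₊ : ℝ) ≤ x := Nat.floor_le hx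
  have he : 2.7 < exp 1 := lt_trans (by norm_num) exp_one_gt_d9
  rw [epochLevel, ← log_rpow (by positivity), rpow_two]
  refine log_le_log (by positivity) ?_
  rw [div_pow, div_le_div_iff₀ hδ0 (by positivity)]
  have hkx : ((⌊x⌋₊ : ℝ) + 1) * (⌊x⌋₊ + 2) ≤ (x + exp 1) ^ 2 := by
    nlinarith [(⌊x⌋₊).cast_nonneg (α := ℝ)]
  calc ((⌊x⌋₊ : ℝ) + 1) * (⌊x⌋₊ + 2) * δ ^ 2 ≤ (x + exp 1) ^ 2 * δ ^ 2 := by gcongr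
    _ ≤ (x + exp 1) ^ 2 * δ := by gcongr; nlinarith

lemma one_le_log_add_exp_one_div {δ x : ℝ} (hδ0 : 0 < δ) (hδ1 : δ ≤ 1) (hx : 0 ≤ x) :
    1 ≤ log ((x + exp 1) / δ) := by
  rw [le_log_iff_exp_le (by positivity), le_div_iff₀ hδ0]
  nlinarith [exp_pos 1]

lemma le_epochVarBound_floor_log {ρ V : ℝ} (hρ : ρ ≠ 0) (hV : 0 ≤ V) :
    V ≤ epochVarBound ρ ⌊log (1 + V / ρ ^ 2)⌋₊ := by
  have hρ2 : 0 < ρ ^ 2 := by positivity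
  have hu : 0 < 1 + V / ρ ^ 2 := by positivity
  have hlt : log (1 + V / ρ ^ 2) < ⌊log (1 + V / ρ ^ 2)⌋₊ + 1 := Nat.lt_floor_add_one _
  have := (exp_lt_exp.2 hlt).le
  rw [exp_log hu] at this
  have hVρ : ρ ^ 2 * (V / ρ ^ 2) = V := by field_simp
  unfold epochVarBound
  nlinarith

lemma epochVarBound_floor_log_le {ρ V : ℝ} (hρ : ρ ≠ 0) (hV : 0 ≤ V) :
    epochVarBound ρ ⌊log (1 + V / ρ ^ 2)⌋₊ ≤ 3 * V + 2 * ρ ^ 2 := by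
  have hρ2 : 0 < ρ ^ 2 := by positivity
  have hu : 0 < 1 + V / ρ ^ 2 := by positivity
  have hx : 0 ≤ log (1 + V / ρ ^ 2) := log_nonneg (by linarith [div_nonneg hV hρ2.le])
  have hle := exp_le_exp.2 (Nat.floor_le hx)
  rw [exp_log hu] at hle
  have he : exp 1 < 2.72 := lt_trans exp_one_lt_d9 (by norm_num)
  have hexp : exp ((⌊log (1 + V / ρ ^ 2)⌋₊ : ℝ) + 1) ≤ exp 1 * (1 + V / ρ ^ 2) := by
    rw [exp_add, mul_comm]
    gcongr
  have hVρ : ρ ^ 2 * (V / ρ ^ 2) = V := by field_simp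
  unfold epochVarBound
  nlinarith [exp_pos 1]

lemma le_four_sqrt_add_of_le_add_sqrt {c ρ S V A W ℓ : ℝ} (hc : 0 ≤ c) (hρ : 0 ≤ ρ) (hV : 0 ≤ V)
    (hA : 0 ≤ A) (hℓ : 1 ≤ ℓ) (hAℓ : A ≤ 2 * ℓ) (hW : W ≤ 3 * V + 2 * ρ ^ 2)
    (hS : S ≤ c * A + √(2 * A * W)) :
    S ≤ 4 * √(V * ℓ) + 11 * (c + ρ) * ℓ := by
  have hroot : √(2 * A * W) ≤ 4 * √(V * ℓ) + 3 * ρ * ℓ := by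
    rw [sqrt_le_iff]
    refine ⟨by positivity, ?_⟩
    have hVℓ := sq_sqrt (mul_nonneg hV (by linarith : 0 ≤ ℓ))
    have h2AW : 2 * A * W ≤ 4 * ℓ * (3 * V + 2 * ρ ^ 2) := by
      calc 2 * A * W ≤ 2 * A * (3 * V + 2 * ρ ^ 2) := by gcongr
        _ ≤ 2 * (2 * ℓ) * (3 * V + 2 * ρ ^ 2) := by gcongr
        _ = _ := by ring
    have hρℓ : 0 ≤ ρ ^ 2 * ℓ * (ℓ - 1) := by
      have : 0 ≤ ℓ - 1 := by linarith
      positivity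
    have hcross : 0 ≤ ρ * ℓ * √(V * ℓ) := by
      have : 0 ≤ ℓ := by linarith
      positivity
    nlinarith
  nlinarith

lemma epochLam_pos {c ρ δ : ℝ} (hc : 0 ≤ c) (hρ : ρ ≠ 0) (hδ0 : 0 < δ) (hδ1 : δ ≤ 1) (k : ℕ) :
    0 < epochLam c ρ δ k := by
  have := epochLevel_pos hδ0 hδ1 k
  have := epochVarBound_pos hρ k
  unfold epochLam
  positivity

lemma epochLam_lt_one_div {c ρ δ : ℝ} (hc : 0 < c) (hρ : ρ ≠ 0) (hδ0 : 0 < δ) (hδ1 : δ ≤ 1)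
    (k : ℕ) : epochLam c ρ δ k < 1 / c := by
  have := epochLevel_pos hδ0 hδ1 k
  have := epochVarBound_pos hρ k
  exact one_div_lt_one_div_of_lt hc (lt_add_of_pos_right c (sqrt_pos.2 (by positivity)))

lemma le_of_forall_epoch {c ρ δ S V : ℝ} (hc : 0 ≤ c) (hρ : 0 < ρ) (hδ0 : 0 < δ) (hδ1 : δ ≤ 1)
    (hV : 0 ≤ V)
    (h : ∀ k, epochLam c ρ δ k * S -
      epochLam c ρ δ k ^ 2 / (2 * (1 - c * epochLam c ρ δ k)) * V ≤ epochLevel δ k) :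
    S ≤ 4 * √(V * log ((log (1 + V / ρ ^ 2) + exp 1) / δ)) +
      11 * (c + ρ) * log ((log (1 + V / ρ ^ 2) + exp 1) / δ) := by
  have hx : 0 ≤ log (1 + V / ρ ^ 2) := log_nonneg (by linarith [div_nonneg hV (sq_nonneg ρ)])
  exact le_four_sqrt_add_of_le_add_sqrt hc hρ.le hV (epochLevel_pos hδ0 hδ1 _).le
    (one_le_log_add_exp_one_div hδ0 hδ1 hx) (epochLevel_floor_le hδ0 hδ1 hx)
    (epochVarBound_floor_log_le hρ.ne' hV)
    (le_add_sqrt_of_subGamma_exponent_le hc (epochLevel_pos hδ0 hδ1 _)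
      (epochVarBound_pos hρ.ne' _) (le_epochVarBound_floor_log hρ.ne' hV) (h _))

lemma measure_exists_exp_epochLevel_le {Ω : Type*} {m0 : MeasurableSpace Ω} {μ : Measure Ω}
    [IsFiniteMeasure μ] {𝒢 : Filtration ℕ m0} {L : ℕ → Ω → ℝ} (hL : Supermartingale L 𝒢 μ)
    (hnonneg : ∀ t, 0 ≤ᵐ[μ] L t) (hL0 : ∫ ω, L 0 ω ∂μ ≤ 1) {δ : ℝ} (hδ0 : 0 < δ) (k : ℕ) :
    μ {ω | ∃ t, exp (epochLevel δ k) ≤ L t ω} ≤ ENNReal.ofReal (δ / ((k + 1) * (k + 2))) := by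
  refine (hL.ville_ineq hnonneg (exp_pos _)).trans (ENNReal.ofReal_le_ofReal ?_)
  rw [epochLevel, exp_log (by positivity), div_div_eq_mul_div]
  gcongr
  exact mul_le_of_le_one_left hδ0.le hL0

theorem stmt10_general {Ω : Type*} {m0 : MeasurableSpace Ω} (μ : Measure Ω) [IsProbabilityMeasure μ]
    (𝒢 : Filtration ℕ m0) (c : ℝ) (hc : 0 < c) (S V : ℕ → Ω → ℝ)
    (hVnonneg : ∀ t ω, 0 ≤ V t ω)
    (hsub : ∀ lam : ℝ, 0 ≤ lam → lam < 1 / c →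
      ∃ L : ℕ → Ω → ℝ, Supermartingale L 𝒢 μ ∧ (∫ ω, L 0 ω ∂μ) ≤ 1 ∧
        ∀ t, ∀ᵐ ω ∂μ,
          Real.exp (lam * S t ω - lam^2 / (2 * (1 - c * lam)) * V t ω) ≤ L t ω)
    (ρ δ : ℝ) (hρ : 0 < ρ) (hδ : δ ∈ Set.Ioo (0:ℝ) 1) :
    ENNReal.ofReal (1 - δ) ≤
      μ {ω | ∀ t, 1 ≤ t →
        S t ω ≤
          4 * Real.sqrt (V t ω *
              Real.log ((Real.log (1 + V t ω / ρ^2) + Real.exp 1) / δ)) +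
            11 * (c + ρ) * Real.log ((Real.log (1 + V t ω / ρ^2) + Real.exp 1) / δ)} := by
  obtain ⟨hδ0, hδ1⟩ := hδ
  choose L hLsup hL0 hdom using fun k => hsub (epochLam c ρ δ k)
    (epochLam_pos hc.le hρ.ne' hδ0 hδ1.le k).le (epochLam_lt_one_div hc hρ.ne' hδ0 hδ1.le k)
  set bad := ⋃ k, {ω | ∃ t, exp (epochLevel δ k) ≤ L k t ω}
  have hbad_meas : MeasurableSet bad := by
    refine .iUnion fun k => ?_
    rw [Set.ofPred_exists]
    exact .iUnion fun t => measurableSet_le measurable_const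
      (((hLsup k).stronglyMeasurable t).measurable.le (𝒢.le t))
  have hbad : μ bad ≤ ENNReal.ofReal δ :=
    calc μ bad ≤ ∑' k, μ {ω | ∃ t, exp (epochLevel δ k) ≤ L k t ω} := measure_iUnion_le _
      _ ≤ ∑' k : ℕ, ENNReal.ofReal (δ / ((k + 1) * (k + 2))) :=
        ENNReal.tsum_le_tsum fun k => measure_exists_exp_epochLevel_le (hLsup k)
          (fun t => (hdom k t).mono fun ω h => (exp_pos _).le.trans h) (hL0 k) hδ0 k
      _ ≤ ENNReal.ofReal δ := tsum_ofReal_div_succ_mul_succ_le hδ0.le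
  calc ENNReal.ofReal (1 - δ) = 1 - ENNReal.ofReal δ := by
        rw [ENNReal.ofReal_sub _ hδ0.le, ENNReal.ofReal_one]
    _ ≤ 1 - μ bad := tsub_le_tsub_left hbad 1
    _ = μ badᶜ := (prob_compl_eq_one_sub hbad_meas).symm
    _ ≤ _ := measure_mono_ae <| by
      filter_upwards [ae_all_iff.2 fun k => ae_all_iff.2 (hdom k)] with ω hdomω hω t _
      refine le_of_forall_epoch hc.le hρ hδ0 hδ1.le (hVnonneg t ω) fun k => ?_
      have : L k t ω < exp (epochLevel δ k) := not_le.1 fun h => hω (Set.mem_iUnion.2 ⟨k, t, h⟩)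
      exact (exp_lt_exp.1 ((hdomω k t).trans_lt this)).le

/-- Time-uniform sub-gamma concentration (Theorem 3.1 of Whitehouse et al., specialised):
if `(S_t, V_t)` is a sub-gamma process with parameter `c`, then with probability at least
`1 − δ`, simultaneously for all `t ≥ 1`,
`S_t ≤ 4·√(V_t·log(H_t/δ)) + 11·(c+ρ)·log(H_t/δ)` where `H_t = log(1 + V_t/ρ²) + e`. -/
theorem stmt10 {Ω : Type*} {m0 : MeasurableSpace Ω} (μ : Measure Ω) [IsProbabilityMeasure μ]
    (𝒢 : Filtration ℕ m0) (c : ℝ) (hc : 0 < c) (S V : ℕ → Ω → ℝ)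
    (hSad : ∀ t, StronglyMeasurable[𝒢 t] (S t))
    (hVad : ∀ t, StronglyMeasurable[𝒢 t] (V t))
    (hVnonneg : ∀ t ω, 0 ≤ V t ω)
    (hsub : ∀ lam : ℝ, 0 ≤ lam → lam < 1 / c →
      ∃ L : ℕ → Ω → ℝ, Supermartingale L 𝒢 μ ∧ (∫ ω, L 0 ω ∂μ) ≤ 1 ∧
        ∀ t, ∀ᵐ ω ∂μ,
          Real.exp (lam * S t ω - lam^2 / (2 * (1 - c * lam)) * V t ω) ≤ L t ω)
    (ρ δ : ℝ) (hρ : 0 < ρ) (hδ : δ ∈ Set.Ioo (0:ℝ) 1) :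
    ENNReal.ofReal (1 - δ) ≤
      μ {ω | ∀ t, 1 ≤ t →
        S t ω ≤
          4 * Real.sqrt (V t ω *
              Real.log ((Real.log (1 + V t ω / ρ^2) + Real.exp 1) / δ)) +
            11 * (c + ρ) * Real.log ((Real.log (1 + V t ω / ρ^2) + Real.exp 1) / δ)} :=
  stmt10_general μ 𝒢 c hc S V hVnonneg hsub ρ δ hρ hδ
end

section
/- Let d ∈ ℕ₊, S > 0, let U ⊆ ℝ be an interval, μ : U → [0,1], and let ℓ : [0,1] × [0,1] → ℝ be such that for each y ∈ [0,1] the map u ↦ ℓ(y, μ(u)) is differentiable on U with derivative μ(u) − y. Let A ⊆ ℝ^d with ‖a‖ ≤ 1 for all a ∈ A, let Θ ⊆ ℝ^d with ‖θ‖ ≤ S for all θ ∈ Θ and ⟨a, θ⟩ ∈ U for all a ∈ A, θ ∈ Θ, and fix θ⋆ ∈ Θ. Define Φ = { (y,a) ↦ ℓ(y, μ(⟨a, θ⟩)) − ℓ(y, μ(⟨a, θ⋆⟩)) : θ ∈ Θ }, a set of functions [0,1] × A → ℝ. Then for every ε > 0 there exists a finite set C of functions [0,1] × A → ℝ with cardinality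 at most (1 + 8S/ε)^d such that every φ ∈ Φ satisfies sup_{(y,a)∈[0,1]×A} |φ(y,a) − ĉ(y,a)| ≤ ε for some ĉ ∈ C. -/
/-!
For fixed `y` the loss `u ↦ ℓ y (μ u)` has derivative `μ u - y ∈ [-1, 1]`, so it is 1-Lipschitz
on `U`, and with `‖a‖ ≤ 1` the map `θ ↦ ℓ y (μ ⟪a, θ⟫)` is 1-Lipschitz uniformly in `(y, a)`.
Hence the excess losses at the points of an `ε`-cover of `Θ` form a uniform `ε`-cover of `Φ`.
A maximal `ε`-separated subset of `Θ ⊆ closedBall 0 S` is such a cover, and comparing volumes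
of the disjoint balls of radius `ε / 2` around its points with the ball of radius `S + ε / 2`
bounds its size by `(1 + 2S/ε)^d`.
-/

open Metric MeasureTheory Module
open scoped NNReal ENNReal

section Packing

variable {E : Type*} [NormedAddCommGroup E] [NormedSpace ℝ E] [FiniteDimensional ℝ E]
  [MeasurableSpace E] [BorelSpace E] {ε : ℝ≥0} {R : ℝ} {x : E}

theorem Metric.IsSeparated.finsetCard_le_of_subset_closedBall {F : Finset E}
    (hF : IsSeparated ε (F : Set E)) (hε : 0 < ε) (hR : 0 ≤ R) (hFR : ↑F ⊆ closedBall x R) :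
    (F.card : ℝ) ≤ (1 + 2 * R / ε) ^ finrank ℝ E := by
  set μ : Measure E := Measure.addHaar
  have hε2 : (0 : ℝ) < ε / 2 := by positivity
  have hdisj : (F : Set E).PairwiseDisjoint fun y => ball y (ε / 2) := by
    intro y hy z hz hyz
    refine ball_disjoint_ball ?_
    have hyz : (ε : ℝ≥0∞) < edist y z := hF hy hz hyz
    rw [edist_nndist, ENNReal.coe_lt_coe, ← NNReal.coe_lt_coe, coe_nndist] at hyz
    linarith
  have hunion : (⋃ y ∈ F, ball y (ε / 2)) ⊆ ball x (R + ε / 2) := by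
    refine Set.iUnion₂_subset fun y hy => ball_subset_ball' ?_
    have hyR := mem_closedBall.mp (hFR hy)
    linarith
  have hvol : ∑ y ∈ F, μ (ball y (ε / 2)) ≤ μ (ball x (R + ε / 2)) := by
    rw [← measure_biUnion_finset hdisj fun _ _ => measurableSet_ball]
    exact measure_mono hunion
  simp only [μ.addHaar_ball_of_pos _ hε2, μ.addHaar_ball_of_pos _ (by positivity : 0 < R + ε / 2),
    Finset.sum_const, nsmul_eq_mul, ← mul_assoc] at hvol
  have hcard := (ENNReal.mul_le_mul_iff_left (measure_ball_pos μ 0 one_pos).ne'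
    measure_ball_lt_top.ne).mp hvol
  rw [← ENNReal.ofReal_natCast, ← ENNReal.ofReal_mul (by positivity),
    ENNReal.ofReal_le_ofReal_iff (by positivity), ← le_div_iff₀ (by positivity), ← div_pow] at hcard
  refine hcard.trans_eq (congrArg (· ^ _) ?_)
  field_simp
  ring

theorem Metric.packingNumber_le_of_subset_closedBall {A : Set E} (hε : 0 < ε) (hR : 0 ≤ R)
    (hA : A ⊆ closedBall x R) :
    packingNumber ε A ≤ ⌊(1 + 2 * R / ε) ^ finrank ℝ E⌋₊ := by
  refine iSup₂_le fun C hCA => iSup_le fun hC => ?_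
  by_contra! hlarge
  obtain ⟨t, htC, ht⟩ := Set.exists_subset_encard_eq (Order.add_one_le_of_lt hlarge)
  obtain ⟨F, rfl⟩ := Set.finite_of_encard_eq_coe ht |>.exists_finset_coe
  rw [Set.encard_coe_eq_coe_finsetCard] at ht
  have hcard := (hC.subset htC).finsetCard_le_of_subset_closedBall hε hR (htC.trans (hCA.trans hA))
  rw [show F.card = ⌊(1 + 2 * R / ε) ^ finrank ℝ E⌋₊ + 1 by exact_mod_cast ht] at hcard
  exact (Nat.lt_floor_add_one _).not_ge (by exact_mod_cast hcard)

theorem Metric.exists_finite_isCover_ncard_le_of_subset_closedBall {A : Set E} (hε : 0 < ε)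
    (hR : 0 ≤ R) (hA : A ⊆ closedBall x R) :
    ∃ N ⊆ A, N.Finite ∧ (N.ncard : ℝ) ≤ (1 + 2 * R / ε) ^ finrank ℝ E ∧ IsCover ε A N := by
  have hpack := packingNumber_le_of_subset_closedBall hε hR hA
  have hfin : packingNumber ε A ≠ ⊤ := ne_top_of_le_ne_top (ENat.natCast_ne_top _) hpack
  rw [← encard_maximalSeparatedSet hfin, Set.encard_le_coe_iff_finite_ncard_le] at hpack
  exact ⟨_, maximalSeparatedSet_subset, hpack.1,
    (Nat.cast_le.mpr hpack.2).trans (Nat.floor_le (by positivity)), isCover_maximalSeparatedSet hfin⟩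

end Packing

open RealInnerProductSpace

theorem lipschitzOnWith_one_loss_comp_link {U : Set ℝ} (hU : Convex ℝ U) {μ : ℝ → ℝ}
    (hμ : ∀ u ∈ U, μ u ∈ Set.Icc (0 : ℝ) 1) {ℓ : ℝ → ℝ → ℝ} {y : ℝ} (hy : y ∈ Set.Icc (0 : ℝ) 1)
    (hderiv : ∀ u ∈ U, HasDerivWithinAt (fun v => ℓ y (μ v)) (μ u - y) U u) :
    LipschitzOnWith 1 (fun v => ℓ y (μ v)) U :=
  hU.lipschitzOnWith_of_nnnorm_hasDerivWithin_le hderiv fun u hu => by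
    rw [← NNReal.coe_le_coe, coe_nnnorm, ← dist_eq_norm]
    exact Real.dist_le_of_mem_Icc_01 (hμ u hu) hy

theorem LipschitzOnWith.abs_sub_comp_inner_le_dist {E : Type*} [NormedAddCommGroup E]
    [InnerProductSpace ℝ E] {f : ℝ → ℝ} {U : Set ℝ} (hf : LipschitzOnWith 1 f U) {a θ θ' : E}
    (ha : ‖a‖ ≤ 1) (hθ : ⟪a, θ⟫ ∈ U) (hθ' : ⟪a, θ'⟫ ∈ U) :
    |f ⟪a, θ⟫ - f ⟪a, θ'⟫| ≤ dist θ θ' :=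
  calc |f ⟪a, θ⟫ - f ⟪a, θ'⟫| ≤ |⟪a, θ⟫ - ⟪a, θ'⟫| := by
        simpa [← Real.dist_eq] using hf.dist_le_mul _ hθ _ hθ'
    _ = |⟪a, θ - θ'⟫| := by rw [inner_sub_right]
    _ ≤ ‖a‖ * ‖θ - θ'‖ := abs_real_inner_le_norm a _
    _ ≤ dist θ θ' := by
        rw [dist_eq_norm]
        exact mul_le_of_le_one_left (norm_nonneg _) ha

theorem stmt13_general (d : ℕ) (S : ℝ) (hS : 0 < S)
    (U : Set ℝ) (hU : Convex ℝ U)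
    (μ : ℝ → ℝ) (hμmap : ∀ u ∈ U, μ u ∈ Set.Icc (0:ℝ) 1)
    (ℓ : ℝ → ℝ → ℝ)
    (hderiv : ∀ y ∈ Set.Icc (0:ℝ) 1, ∀ u ∈ U,
      HasDerivWithinAt (fun v => ℓ y (μ v)) (μ u - y) U u)
    (A : Set (EuclideanSpace ℝ (Fin d))) (hA : ∀ a ∈ A, ‖a‖ ≤ 1)
    (Θ : Set (EuclideanSpace ℝ (Fin d))) (hΘ : ∀ θ ∈ Θ, ‖θ‖ ≤ S)
    (hAΘ : ∀ a ∈ A, ∀ θ ∈ Θ, ⟪a, θ⟫ ∈ U)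
    (θstar : EuclideanSpace ℝ (Fin d))
    (ε : ℝ) (hε : 0 < ε) :
    ∃ C : Set (ℝ × EuclideanSpace ℝ (Fin d) → ℝ), C.Finite ∧
      (C.ncard : ℝ) ≤ (1 + 8 * S / ε) ^ d ∧
      ∀ θ ∈ Θ, ∃ c ∈ C, ∀ y ∈ Set.Icc (0:ℝ) 1, ∀ a ∈ A,
        |(ℓ y (μ ⟪a, θ⟫) - ℓ y (μ ⟪a, θstar⟫)) - c (y, a)| ≤ ε := by
  have hΘball : Θ ⊆ closedBall 0 S := fun θ hθ => mem_closedBall_zero_iff.mpr (hΘ θ hθ)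
  obtain ⟨N, hNΘ, hNfin, hNcard, hNcover⟩ :=
    exists_finite_isCover_ncard_le_of_subset_closedBall (ε := ε.toNNReal)
      (Real.toNNReal_pos.mpr hε) hS.le hΘball
  rw [Real.coe_toNNReal _ hε.le, finrank_euclideanSpace_fin] at hNcard
  refine ⟨(fun θ p => ℓ p.1 (μ ⟪p.2, θ⟫) - ℓ p.1 (μ ⟪p.2, θstar⟫)) '' N, hNfin.image _, ?_, ?_⟩
  · refine (Nat.cast_le.mpr (Set.ncard_image_le hNfin)).trans (hNcard.trans ?_)
    gcongr
    linarith
  · intro θ hθ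
    obtain ⟨x, hxN, hθx⟩ := Set.mem_iUnion₂.mp (hNcover.subset_iUnion_closedBall hθ)
    rw [mem_closedBall, Real.coe_toNNReal _ hε.le] at hθx
    refine ⟨_, Set.mem_image_of_mem _ hxN, fun y hy a ha => ?_⟩
    have hlip := lipschitzOnWith_one_loss_comp_link hU hμmap hy (hderiv y hy)
    show |(ℓ y (μ ⟪a, θ⟫) - ℓ y (μ ⟪a, θstar⟫)) - (ℓ y (μ ⟪a, x⟫) - ℓ y (μ ⟪a, θstar⟫))| ≤ ε
    rw [sub_sub_sub_cancel_right]
    calc _ ≤ dist θ x :=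
          hlip.abs_sub_comp_inner_le_dist (hA a ha) (hAΘ a ha θ hθ) (hAΘ a ha x (hNΘ hxN))
      _ ≤ ε := hθx

/-- Covering number bound for the excess loss class of a compatible generalised linear
model: for every `ε > 0` there is a uniform external `ε`-cover of the excess loss class of
cardinality at most `(1 + 8S/ε)^d`. -/
theorem stmt13 (d : ℕ) (hd : 0 < d) (S : ℝ) (hS : 0 < S)
    (U : Set ℝ) (hU : Convex ℝ U)
    (μ : ℝ → ℝ) (hμmap : ∀ u ∈ U, μ u ∈ Set.Icc (0:ℝ) 1)
    (ℓ : ℝ → ℝ → ℝ)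
    (hderiv : ∀ y ∈ Set.Icc (0:ℝ) 1, ∀ u ∈ U,
      HasDerivWithinAt (fun v => ℓ y (μ v)) (μ u - y) U u)
    (A : Set (EuclideanSpace ℝ (Fin d))) (hA : ∀ a ∈ A, ‖a‖ ≤ 1)
    (Θ : Set (EuclideanSpace ℝ (Fin d))) (hΘ : ∀ θ ∈ Θ, ‖θ‖ ≤ S)
    (hAΘ : ∀ a ∈ A, ∀ θ ∈ Θ, ⟪a, θ⟫ ∈ U)
    (θstar : EuclideanSpace ℝ (Fin d)) (hθstar : θstar ∈ Θ)
    (ε : ℝ) (hε : 0 < ε) :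
    ∃ C : Set (ℝ × EuclideanSpace ℝ (Fin d) → ℝ), C.Finite ∧
      (C.ncard : ℝ) ≤ (1 + 8 * S / ε) ^ d ∧
      ∀ θ ∈ Θ, ∃ c ∈ C, ∀ y ∈ Set.Icc (0:ℝ) 1, ∀ a ∈ A,
        |(ℓ y (μ ⟪a, θ⟫) - ℓ y (μ ⟪a, θstar⟫)) - c (y, a)| ≤ ε :=
  stmt13_general d S hS U hU μ hμmap ℓ hderiv A hA Θ hΘ hAΘ θstar ε hε
end

section
/- Let U ⊆ ℝ be an interval and μ : U → [0,1] be differentiable on U, and let ℓ : [0,1] × [0,1] → ℝ be such that for each y ∈ [0,1] the map u ↦ ℓ(y, μ(u)) is differentiable on U with derivative μ(u) − y. Let a ∈ ℝ^d with ‖a‖ ≤ 1, let θ, θ⋆ ∈ ℝ^d with ⟨a, θ⟩ ∈ U and ⟨a, θ⋆⟩ ∈ U, and let P be a probability measure on [0,1] with ∫ y dP(y) = μ(⟨a, θ⋆⟩). Writing θ(t) = t·θ + (1−t)·θ⋆, one has ∫ [ ℓ(y, μ(⟨a, θ⟩)) − ℓ(y, μ(⟨a, θ⋆⟩)) ] dP(y)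 = ⟨a, θ − θ⋆⟩² · ∫₀¹ (1−t)·μ'(⟨a, θ(t)⟩) dt, and moreover if μ' is continuous there exists ζ ∈ { ⟨a, θ(t)⟩ : t ∈ [0,1] } such that this quantity equals (1/2)·μ'(ζ)·⟨a, θ − θ⋆⟩². -/
/-!
Along the segment `c t = t ⟪a, θ⟫ + (1 - t) ⟪a, θ⋆⟫`, Taylor's formula with integral remainder
applied to `t ↦ ℓ y (μ (c t))`, whose first two derivatives are `(μ (c t) - y) δ` and
`μ' (c t) δ²` with `δ = ⟪a, θ - θ⋆⟫`, gives the identity for every label `y`; averaging over `y`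
removes the first-order term because the mean label is `μ ⟪a, θ⋆⟫`. The remainder is a genuine
Lebesgue integral: `v ↦ ℓ 0 (μ v) - ℓ 1 (μ v)` has derivative `1`, so `μ` is injective on `U`,
hence `μ ∘ c` is monotone and its derivative is integrable. The second claim is the mean value
theorem for integrals with the weight `1 - t`.
-/

open RealInnerProductSpace MeasureTheory Set

theorem taylor_integral_remainder_first_order {h h' h'' : ℝ → ℝ} {a b : ℝ} (hab : a ≤ b)
    (hh : ∀ t ∈ Icc a b, HasDerivWithinAt h (h' t) (Icc a b) t)
    (hh' : ∀ t ∈ Icc a b, HasDerivWithinAt h' (h'' t) (Icc a b) t)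
    (hint : IntervalIntegrable h'' volume a b) :
    h b = h a + (b - a) * h' a + ∫ t in a..b, (b - t) * h'' t := by
  have hcont' : ContinuousOn h' (Icc a b) := fun t ht => (hh' t ht).continuousWithinAt
  have hftc : ∫ t in a..b, h' t = h b - h a :=
    intervalIntegral.integral_eq_sub_of_hasDeriv_right_of_le hab
      (fun t ht => (hh t ht).continuousWithinAt)
      (fun t ht => ((hh t (Ioo_subset_Icc_self ht)).hasDerivAt
        (Icc_mem_nhds ht.1 ht.2)).hasDerivWithinAt)
      (hcont'.intervalIntegrable_of_Icc hab)
  have hparts := intervalIntegral.integral_mul_deriv_eq_deriv_mul_of_hasDerivWithinAt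
    (u := fun t => b - t) (u' := fun _ => -1) (a := a) (b := b)
    (fun t _ => ((hasDerivAt_id t).const_sub b).hasDerivWithinAt) (by rwa [uIcc_of_le hab])
    intervalIntegrable_const hint
  simp only [neg_one_mul, intervalIntegral.integral_neg, sub_self, zero_mul, hftc] at hparts
  linarith

theorem exists_integral_mul_eq_integral_mul {w φ : ℝ → ℝ} {a b : ℝ} (hab : a ≤ b)
    (hw : IntervalIntegrable w volume a b) (hw₀ : ∀ t ∈ Icc a b, 0 ≤ w t)
    (hφ : ContinuousOn φ (Icc a b)) :
    ∃ c ∈ Icc a b, ∫ t in a..b, w t * φ t = (∫ t in a..b, w t) * φ c := by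
  obtain ⟨tmin, htmin, hmin⟩ := isCompact_Icc.exists_isMinOn (nonempty_Icc.2 hab) hφ
  obtain ⟨tmax, htmax, hmax⟩ := isCompact_Icc.exists_isMaxOn (nonempty_Icc.2 hab) hφ
  have hwφ : IntervalIntegrable (fun t => w t * φ t) volume a b :=
    hw.mul_continuousOn (by rwa [uIcc_of_le hab])
  have hlow : (∫ t in a..b, w t) * φ tmin ≤ ∫ t in a..b, w t * φ t := by
    rw [← intervalIntegral.integral_mul_const]
    exact intervalIntegral.integral_mono_on hab (hw.mul_const _) hwφ
      fun t ht => mul_le_mul_of_nonneg_left (hmin ht) (hw₀ t ht)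
  have hup : ∫ t in a..b, w t * φ t ≤ (∫ t in a..b, w t) * φ tmax := by
    rw [← intervalIntegral.integral_mul_const]
    exact intervalIntegral.integral_mono_on hab hwφ (hw.mul_const _)
      fun t ht => mul_le_mul_of_nonneg_left (hmax ht) (hw₀ t ht)
  have hsub : uIcc tmin tmax ⊆ Icc a b := ordConnected_Icc.uIcc_subset htmin htmax
  obtain ⟨c, hc, hceq⟩ := intermediate_value_uIcc ((hφ.mono hsub).const_smul (∫ t in a..b, w t))
    (mem_uIcc_of_le hlow hup)
  exact ⟨c, hsub hc, hceq.symm⟩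

theorem intervalIntegrable_deriv_of_injOn {g g' : ℝ → ℝ} {a b : ℝ} (hab : a ≤ b)
    (hg : ContinuousOn g (Icc a b)) (hinj : InjOn g (Icc a b))
    (hg' : ∀ t ∈ Ioo a b, HasDerivAt g (g' t) t) : IntervalIntegrable g' volume a b := by
  rw [intervalIntegrable_iff_integrableOn_Ioo_of_le hab]
  rcases hg.strictMonoOn_of_injOn_Icc' hab hinj with hmono | hanti
  · have hderiv := (hmono.monotoneOn.mono (uIcc_of_le hab).subset).intervalIntegrable_deriv
    rw [intervalIntegrable_iff_integrableOn_Ioo_of_le hab] at hderiv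
    exact hderiv.congr_fun (fun t ht => (hg' t ht).deriv) measurableSet_Ioo
  · have hderiv := (hanti.antitoneOn.neg.mono (uIcc_of_le hab).subset).intervalIntegrable_deriv
    rw [intervalIntegrable_iff_integrableOn_Ioo_of_le hab] at hderiv
    simpa using hderiv.neg.congr_fun (fun t ht => by simp [(hg' t ht).deriv]) measurableSet_Ioo

def IsCompatibleLoss (U : Set ℝ) (μ : ℝ → ℝ) (ℓ : ℝ → ℝ → ℝ) : Prop :=
  ∀ y ∈ Icc (0:ℝ) 1, ∀ u ∈ U, HasDerivWithinAt (fun v => ℓ y (μ v)) (μ u - y) U u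

theorem IsCompatibleLoss.injOn {U : Set ℝ} {μ : ℝ → ℝ} {ℓ : ℝ → ℝ → ℝ}
    (hℓ : IsCompatibleLoss U μ ℓ) (hU : Convex ℝ U) : InjOn μ U := by
  have hdiff : ∀ u ∈ U, HasDerivWithinAt (fun v => ℓ 0 (μ v) - ℓ 1 (μ v)) 1 U u := fun u hu => by
    simpa using (hℓ 0 (by simp) u hu).fun_sub (hℓ 1 (by simp) u hu)
  have hmono : StrictMonoOn (fun v => ℓ 0 (μ v) - ℓ 1 (μ v)) U :=
    strictMonoOn_of_hasDerivWithinAt_pos hU (fun u hu => (hdiff u hu).continuousWithinAt)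
      (fun u hu => (hdiff u (interior_subset hu)).mono interior_subset) fun _ _ => one_pos
  exact hmono.injOn.of_comp (g := fun w => ℓ 0 w - ℓ 1 w)

section Segment

variable {U : Set ℝ} {u us : ℝ}

theorem Convex.mapsTo_segment (hU : Convex ℝ U) (hu : u ∈ U) (hus : us ∈ U) :
    MapsTo (fun t => t * u + (1 - t) * us) (Icc 0 1) U :=
  fun t ht => hU hu hus ht.1 (sub_nonneg.2 ht.2) (add_sub_cancel t 1)

theorem Convex.hasDerivWithinAt_comp_segment {f f' : ℝ → ℝ} (hU : Convex ℝ U) (hu : u ∈ U)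
    (hus : us ∈ U) (hf : ∀ v ∈ U, HasDerivWithinAt f (f' v) U v) {t : ℝ} (ht : t ∈ Icc 0 1) :
    HasDerivWithinAt (fun t => f (t * u + (1 - t) * us))
      (f' (t * u + (1 - t) * us) * (u - us)) (Icc 0 1) t := by
  have hpath : HasDerivAt (fun t : ℝ => t * u + (1 - t) * us) (u - us) t :=
    (((hasDerivAt_id' t).mul_const u).fun_add
      (((hasDerivAt_id' t).const_sub 1).mul_const us)).congr_deriv (by ring)
  exact (hf _ (hU.mapsTo_segment hu hus ht)).comp t hpath.hasDerivWithinAt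
    (hU.mapsTo_segment hu hus)

theorem Convex.intervalIntegrable_deriv_comp_segment {μ μ' : ℝ → ℝ} (hU : Convex ℝ U)
    (hu : u ∈ U) (hus : us ∈ U) (hμd : ∀ v ∈ U, HasDerivWithinAt μ (μ' v) U v)
    (hinj : InjOn μ U) :
    IntervalIntegrable (fun t => μ' (t * u + (1 - t) * us)) volume 0 1 := by
  rcases eq_or_ne u us with rfl | hne
  · have hconst (t v : ℝ) : t * v + (1 - t) * v = v := by ring
    simp only [hconst, intervalIntegrable_const]
  have hμc := fun t ht => hU.hasDerivWithinAt_comp_segment hu hus hμd (t := t) ht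
  have hpath_inj : InjOn (fun t : ℝ => t * u + (1 - t) * us) (Icc 0 1) := fun s _ t _ hst => by
    have : (s - t) * (u - us) = 0 := by linear_combination hst
    exact sub_eq_zero.1 ((mul_eq_zero.1 this).resolve_right (sub_ne_zero.2 hne))
  have hderiv := intervalIntegrable_deriv_of_injOn zero_le_one
    (fun t ht => (hμc t ht).continuousWithinAt) (hinj.comp hpath_inj (hU.mapsTo_segment hu hus))
    (fun t ht => (hμc t (Ioo_subset_Icc_self ht)).hasDerivAt (Icc_mem_nhds ht.1 ht.2))
  simpa [sub_ne_zero.2 hne] using hderiv.mul_const (u - us)⁻¹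

end Segment

namespace IsCompatibleLoss

variable {U : Set ℝ} {μ μ' : ℝ → ℝ} {ℓ : ℝ → ℝ → ℝ} {u us : ℝ}

theorem sub_eq_integral (hℓ : IsCompatibleLoss U μ ℓ) (hU : Convex ℝ U)
    (hμd : ∀ v ∈ U, HasDerivWithinAt μ (μ' v) U v) (hu : u ∈ U) (hus : us ∈ U)
    {y : ℝ} (hy : y ∈ Icc 0 1) :
    ℓ y (μ u) - ℓ y (μ us) = (μ us - y) * (u - us) +
      (u - us) ^ 2 * ∫ t in (0:ℝ)..1, (1 - t) * μ' (t * u + (1 - t) * us) := by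
  have htaylor := taylor_integral_remainder_first_order zero_le_one
    (h := fun t => ℓ y (μ (t * u + (1 - t) * us)))
    (h' := fun t => (μ (t * u + (1 - t) * us) - y) * (u - us))
    (h'' := fun t => μ' (t * u + (1 - t) * us) * (u - us) ^ 2)
    (fun t ht => hU.hasDerivWithinAt_comp_segment hu hus (hℓ y hy) ht)
    (fun t ht => (((hU.hasDerivWithinAt_comp_segment hu hus hμd ht).sub_const y).mul_const
      (u - us)).congr_deriv (by ring))
    ((hU.intervalIntegrable_deriv_comp_segment hu hus hμd (hℓ.injOn hU)).mul_const _)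
  simp only [one_mul, zero_mul, sub_self, zero_add, sub_zero, add_zero, ← mul_assoc,
    intervalIntegral.integral_mul_const] at htaylor
  rw [htaylor]
  ring

theorem integral_sub_eq (hℓ : IsCompatibleLoss U μ ℓ) (hU : Convex ℝ U)
    (hμd : ∀ v ∈ U, HasDerivWithinAt μ (μ' v) U v) (hu : u ∈ U) (hus : us ∈ U)
    (P : Measure ℝ) [IsProbabilityMeasure P] (hP : ∀ᵐ y ∂P, y ∈ Icc (0:ℝ) 1)
    (hmean : ∫ y, y ∂P = μ us) :
    ∫ y, (ℓ y (μ u) - ℓ y (μ us)) ∂P =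
      (u - us) ^ 2 * ∫ t in (0:ℝ)..1, (1 - t) * μ' (t * u + (1 - t) * us) := by
  have hid : Integrable (fun y : ℝ => y) P :=
    .of_bound measurable_id.aestronglyMeasurable 1
      (hP.mono fun y hy => abs_le.2 ⟨by linarith [hy.1], hy.2⟩)
  have hlin : Integrable (fun y => μ us - y) P := (integrable_const _).sub hid
  rw [integral_congr_ae (hP.mono fun y hy => hℓ.sub_eq_integral hU hμd hu hus hy),
    integral_add (hlin.mul_const _) (integrable_const _),
    integral_mul_const, integral_sub (integrable_const _) hid, hmean]
  simp

theorem exists_integral_sub_eq (hℓ : IsCompatibleLoss U μ ℓ) (hU : Convex ℝ U)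
    (hμd : ∀ v ∈ U, HasDerivWithinAt μ (μ' v) U v) (hμ' : ContinuousOn μ' U)
    (hu : u ∈ U) (hus : us ∈ U)
    (P : Measure ℝ) [IsProbabilityMeasure P] (hP : ∀ᵐ y ∂P, y ∈ Icc (0:ℝ) 1)
    (hmean : ∫ y, y ∂P = μ us) :
    ∃ t₀ ∈ Icc (0:ℝ) 1, ∫ y, (ℓ y (μ u) - ℓ y (μ us)) ∂P =
      1 / 2 * μ' (t₀ * u + (1 - t₀) * us) * (u - us) ^ 2 := by
  have hweight : ∫ t in (0:ℝ)..1, (1 - t) = 1 / 2 := by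
    rw [intervalIntegral.integral_sub intervalIntegrable_const
      intervalIntegral.intervalIntegrable_id, integral_id]
    norm_num
  obtain ⟨t₀, ht₀, hmvt⟩ := exists_integral_mul_eq_integral_mul zero_le_one
    (φ := fun t => μ' (t * u + (1 - t) * us))
    (intervalIntegrable_const.sub intervalIntegral.intervalIntegrable_id)
    (fun t ht => sub_nonneg.2 ht.2)
    (hμ'.comp (by fun_prop) (hU.mapsTo_segment hu hus))
  refine ⟨t₀, ht₀, ?_⟩
  rw [hℓ.integral_sub_eq hU hμd hu hus P hP hmean, hmvt, hweight]
  ring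

end IsCompatibleLoss

theorem stmt14_general {d : ℕ} (U : Set ℝ) (hU : Convex ℝ U)
    (μ μ' : ℝ → ℝ)
    (hμd : ∀ u ∈ U, HasDerivWithinAt μ (μ' u) U u)
    (ℓ : ℝ → ℝ → ℝ)
    (hderiv : ∀ y ∈ Set.Icc (0:ℝ) 1, ∀ u ∈ U,
      HasDerivWithinAt (fun v => ℓ y (μ v)) (μ u - y) U u)
    (a θ θstar : EuclideanSpace ℝ (Fin d))
    (hθU : ⟪a, θ⟫ ∈ U) (hθsU : ⟪a, θstar⟫ ∈ U)
    (P : Measure ℝ) [IsProbabilityMeasure P] (hP : ∀ᵐ y ∂P, y ∈ Set.Icc (0:ℝ) 1)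
    (hmean : (∫ y, y ∂P) = μ ⟪a, θstar⟫) :
    ((∫ y, (ℓ y (μ ⟪a, θ⟫) - ℓ y (μ ⟪a, θstar⟫)) ∂P) =
        ⟪a, θ - θstar⟫ ^ 2 *
          ∫ t in (0:ℝ)..1,
            (1 - t) * μ' ⟪a, (t • θ + (1 - t) • θstar : EuclideanSpace ℝ (Fin d))⟫) ∧
      (ContinuousOn μ' U → ∃ t₀ ∈ Set.Icc (0:ℝ) 1,
        (∫ y, (ℓ y (μ ⟪a, θ⟫) - ℓ y (μ ⟪a, θstar⟫)) ∂P) =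
          (1 / 2) * μ' ⟪a, (t₀ • θ + (1 - t₀) • θstar : EuclideanSpace ℝ (Fin d))⟫ *
            ⟪a, θ - θstar⟫ ^ 2) := by
  have hℓ : IsCompatibleLoss U μ ℓ := hderiv
  simp only [inner_add_right, real_inner_smul_right, inner_sub_right]
  exact ⟨hℓ.integral_sub_eq hU hμd hθU hθsU P hP hmean,
    fun hμ' => hℓ.exists_integral_sub_eq hU hμd hμ' hθU hθsU P hP hmean⟩

/-- The expected excess loss of a compatible GLM at action `a`, comparing `θ` to the true
parameter `θ⋆`, equals `⟨a, θ−θ⋆⟩² ∫₀¹ (1−t)μ'(⟨a, θ(t)⟩) dt`, and, if `μ'` is continuous,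
also equals `(1/2)·μ'(ζ)·⟨a, θ−θ⋆⟩²` for some `ζ` on the segment of inner products. -/
theorem stmt14 {d : ℕ} (U : Set ℝ) (hU : Convex ℝ U)
    (μ μ' : ℝ → ℝ) (hμmap : ∀ u ∈ U, μ u ∈ Set.Icc (0:ℝ) 1)
    (hμd : ∀ u ∈ U, HasDerivWithinAt μ (μ' u) U u)
    (ℓ : ℝ → ℝ → ℝ)
    (hderiv : ∀ y ∈ Set.Icc (0:ℝ) 1, ∀ u ∈ U,
      HasDerivWithinAt (fun v => ℓ y (μ v)) (μ u - y) U u)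
    (a θ θstar : EuclideanSpace ℝ (Fin d)) (ha : ‖a‖ ≤ 1)
    (hθU : ⟪a, θ⟫ ∈ U) (hθsU : ⟪a, θstar⟫ ∈ U)
    (P : Measure ℝ) [IsProbabilityMeasure P] (hP : ∀ᵐ y ∂P, y ∈ Set.Icc (0:ℝ) 1)
    (hmean : (∫ y, y ∂P) = μ ⟪a, θstar⟫) :
    ((∫ y, (ℓ y (μ ⟪a, θ⟫) - ℓ y (μ ⟪a, θstar⟫)) ∂P) =
        ⟪a, θ - θstar⟫ ^ 2 *
          ∫ t in (0:ℝ)..1,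
            (1 - t) * μ' ⟪a, (t • θ + (1 - t) • θstar : EuclideanSpace ℝ (Fin d))⟫) ∧
      (ContinuousOn μ' U → ∃ t₀ ∈ Set.Icc (0:ℝ) 1,
        (∫ y, (ℓ y (μ ⟪a, θ⟫) - ℓ y (μ ⟪a, θstar⟫)) ∂P) =
          (1 / 2) * μ' ⟪a, (t₀ • θ + (1 - t₀) • θstar : EuclideanSpace ℝ (Fin d))⟫ *
            ⟪a, θ - θstar⟫ ^ 2) :=
  stmt14_general U hU μ μ' hμd ℓ hderiv a θ θstar hθU hθsU P hP hmean
end
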